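/- arXiv:0810.3957 — 8 statements merged into one kernel-verified Lean document; each statement's English description precedes it below -/
import Mathlib

section
/- Let d ≥ 1, let 1 ≤ k ≤ d, and let p₀, p₁, …, p_k ∈ ℝ^d be affinely independent points. Let w₀, w₁, …, w_k be non-negative real numbers such that the open balls B(p_i, √(w_i)) are pairwise disjoint. Then there exists a unique pair (z,u) ∈ ℝ^d × ℝ such that z lies in the affine span H of {p₀,…,p_k} and ‖z − p_i‖² = u + w_i for every i = 0,1,…,k. -/
/-!
Write `z = y +ᵥ p₀` with `y` in the direction of the affine span, i.e. in the span of the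
`vᵢ = pᵢ -ᵥ p₀`. Subtracting the equation at `p₀` from the others, the conditions
`‖z - pᵢ‖² = u + wᵢ` become `u = ‖y‖² - w₀` together with the linear system
`⟪vᵢ, y⟫ = (‖vᵢ‖² + w₀ - wᵢ) / 2`. On the span of the linearly independent `vᵢ`, the map
`y ↦ (⟪vᵢ, y⟫)ᵢ` is injective (a vector of the span orthogonal to it vanishes), hence bijective
by a dimension count, so the system has exactly one solution there.
-/

noncomputable section

open Metric

section

variable {ι E : Type*} [NormedAddCommGroup E] [InnerProductSpace ℝ E]

def spanInnerMap (v : ι → E) : Submodule.span ℝ (Set.range v) →ₗ[ℝ] (ι → ℝ) :=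
  LinearMap.pi fun i => (innerₛₗ ℝ (v i)).domRestrict _

@[simp]
theorem spanInnerMap_apply (v : ι → E) (y : Submodule.span ℝ (Set.range v)) (i : ι) :
    spanInnerMap v y i = inner ℝ (v i) (y : E) :=
  rfl

theorem spanInnerMap_injective (v : ι → E) : Function.Injective (spanInnerMap v) := by
  rw [← LinearMap.ker_eq_bot, Submodule.eq_bot_iff]
  rintro ⟨y, hy⟩ hker
  have hv : ∀ i, inner ℝ y (v i) = 0 := fun i => by
    rw [real_inner_comm]; exact congrFun (LinearMap.mem_ker.1 hker) i
  have hspan : Submodule.span ℝ (Set.range v) ≤ LinearMap.ker (innerₛₗ ℝ y) :=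
    Submodule.span_le.2 <| Set.range_subset_iff.2 hv
  exact Subtype.ext <| inner_self_eq_zero.1 (hspan hy)

theorem LinearIndependent.existsUnique_inner_eq [Finite ι] {v : ι → E}
    (hv : LinearIndependent ℝ v) (c : ι → ℝ) :
    ∃! y : Submodule.span ℝ (Set.range v), ∀ i, inner ℝ (v i) (y : E) = c i := by
  have := Fintype.ofFinite ι
  have := FiniteDimensional.span_of_finite ℝ (Set.finite_range v)
  have hrank : Module.finrank ℝ (Submodule.span ℝ (Set.range v)) = Module.finrank ℝ (ι → ℝ) := by
    rw [finrank_span_eq_card hv, Module.finrank_fintype_fun_eq_card]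
  have hbij : Function.Bijective (spanInnerMap v) :=
    ⟨spanInnerMap_injective v,
      (LinearMap.injective_iff_surjective_of_finrank_eq_finrank hrank).1 (spanInnerMap_injective v)⟩
  simpa only [funext_iff, spanInnerMap_apply] using hbij.existsUnique c

end

section

variable {ι E P : Type*} [NormedAddCommGroup E] [InnerProductSpace ℝ E] [MetricSpace P]
  [NormedAddTorsor E P]

theorem dist_sq_eq_norm_vsub_sq_sub_inner_add (z q o : P) :
    dist z q ^ 2 = ‖z -ᵥ o‖ ^ 2 - 2 * inner ℝ (q -ᵥ o) (z -ᵥ o) + ‖q -ᵥ o‖ ^ 2 := by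
  rw [dist_eq_norm_vsub E, ← vsub_sub_vsub_cancel_right z q o, norm_sub_sq_real, real_inner_comm]

theorem forall_dist_sq_eq_add_iff (p : ι → P) (w : ι → ℝ) (i₀ : ι) (z : P) (u : ℝ) :
    (∀ i, dist z (p i) ^ 2 = u + w i) ↔
      u = ‖z -ᵥ p i₀‖ ^ 2 - w i₀ ∧ ∀ i : {i // i ≠ i₀},
        inner ℝ (p i -ᵥ p i₀) (z -ᵥ p i₀) = (‖p i -ᵥ p i₀‖ ^ 2 + w i₀ - w i) / 2 := by
  simp only [dist_sq_eq_norm_vsub_sq_sub_inner_add z _ (p i₀)]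
  constructor
  · intro h
    have h₀ := h i₀
    simp only [vsub_self, inner_zero_left, norm_zero, mul_zero, sub_zero, add_zero,
      zero_pow two_ne_zero] at h₀
    exact ⟨by linarith, fun i => by linarith [h i]⟩
  · rintro ⟨rfl, h⟩ i
    by_cases hi : i = i₀
    · subst hi; simp
    · rw [h ⟨i, hi⟩]; ring

theorem AffineIndependent.existsUnique_dist_sq_eq_add [Finite ι] [Nonempty ι] {p : ι → P}
    (hp : AffineIndependent ℝ p) (w : ι → ℝ) :
    ∃! zu : P × ℝ, zu.1 ∈ affineSpan ℝ (Set.range p) ∧ ∀ i, dist zu.1 (p i) ^ 2 = zu.2 + w i := by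
  obtain ⟨i₀⟩ := ‹Nonempty ι›
  set v : {i // i ≠ i₀} → E := fun i => p i -ᵥ p i₀
  have hv : LinearIndependent ℝ v := (affineIndependent_iff_linearIndependent_vsub ℝ p i₀).1 hp
  have hdir : (affineSpan ℝ (Set.range p)).direction = Submodule.span ℝ (Set.range v) := by
    rw [direction_affineSpan, vectorSpan_range_eq_span_range_vsub_right_ne]
  have hp₀ : p i₀ ∈ affineSpan ℝ (Set.range p) := mem_affineSpan ℝ (Set.mem_range_self i₀)
  obtain ⟨y, hy, hy_unique⟩ :=
    hv.existsUnique_inner_eq fun i => (‖v i‖ ^ 2 + w i₀ - w i) / 2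
  refine ⟨((y : E) +ᵥ p i₀, ‖(y : E)‖ ^ 2 - w i₀), ⟨?_, ?_⟩, ?_⟩
  · exact AffineSubspace.vadd_mem_of_mem_direction (hdir.symm ▸ y.2) hp₀
  · rw [forall_dist_sq_eq_add_iff p w i₀]
    simpa only [vadd_vsub, true_and] using hy
  · rintro ⟨z, u⟩ ⟨hz, hzu⟩
    rw [forall_dist_sq_eq_add_iff p w i₀] at hzu
    dsimp only at hz hzu
    have hz_dir : z -ᵥ p i₀ ∈ Submodule.span ℝ (Set.range v) :=
      hdir ▸ AffineSubspace.vsub_mem_direction hz hp₀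
    have hzy : z -ᵥ p i₀ = y := congrArg Subtype.val (hy_unique ⟨_, hz_dir⟩ hzu.2)
    rw [Prod.mk.injEq, hzu.1, hzy, eq_vadd_iff_vsub_eq]
    exact ⟨hzy, rfl⟩

end

theorem stmt2_general {d : ℕ} (k : ℕ)
    (p : Fin (k + 1) → EuclideanSpace ℝ (Fin d)) (hp : AffineIndependent ℝ p)
    (w : Fin (k + 1) → ℝ) :
    ∃! zu : EuclideanSpace ℝ (Fin d) × ℝ,
      zu.1 ∈ affineSpan ℝ (Set.range p) ∧ ∀ i, ‖zu.1 - p i‖ ^ 2 = zu.2 + w i := by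
  simpa only [dist_eq_norm] using hp.existsUnique_dist_sq_eq_add w

/-- Let `p₀,…,p_k ∈ ℝ^d` (`1 ≤ k ≤ d`) be affinely independent and let
`w₀,…,w_k ≥ 0` be such that the open balls `B(pᵢ, √wᵢ)` are pairwise disjoint.
Then there is a unique pair `(z,u)` with `z` in the affine span of the `pᵢ`'s and
`‖z - pᵢ‖² = u + wᵢ` for all `i`. -/
theorem stmt2 {d : ℕ} (hd : 1 ≤ d) (k : ℕ) (hk1 : 1 ≤ k) (hkd : k ≤ d)
    (p : Fin (k + 1) → EuclideanSpace ℝ (Fin d)) (hp : AffineIndependent ℝ p)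
    (w : Fin (k + 1) → ℝ) (hw : ∀ i, 0 ≤ w i)
    (hdisj : ∀ i j, i ≠ j →
      Disjoint (ball (p i) (Real.sqrt (w i))) (ball (p j) (Real.sqrt (w j)))) :
    ∃! zu : EuclideanSpace ℝ (Fin d) × ℝ,
      zu.1 ∈ affineSpan ℝ (Set.range p) ∧ ∀ i, ‖zu.1 - p i‖ ^ 2 = zu.2 + w i :=
  stmt2_general k p hp w
end
end

section
/- Let d ≥ 1, M > 0, let P ⊆ ℝ^d be M-separated and 2M-syndetic, let w ∈ 𝒲, and let τ = {p₀,p₁,…,p_d} ∈ Del(P,w) with orthosphere (z,u) with respect to w. Then u < 4M², ‖z − p_i‖² < 5M² for every i, and consequently ‖p_i − p_j‖ < 2√5·M for all i, j = 0,1,…,d. -/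
noncomputable section

open Metric

variable {d : ℕ}

/-- `P` is `M`-separated. -/
def IsSeparatedSet (M : ℝ) (P : Set (EuclideanSpace ℝ (Fin d))) : Prop :=
  ∀ p ∈ P, ∀ q ∈ P, p ≠ q → M ≤ dist p q

/-- `P` is `M`-syndetic. -/
def IsSyndeticSet (M : ℝ) (P : Set (EuclideanSpace ℝ (Fin d))) : Prop :=
  ∀ x : EuclideanSpace ℝ (Fin d), ∃ p ∈ P, dist x p < M

/-- `Δ_k(P)`: the `(k+1)`-element affinely independent subsets of `P`. -/
def DeltaK (k : ℕ) (P : Set (EuclideanSpace ℝ (Fin d))) :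
    Set (Finset (EuclideanSpace ℝ (Fin d))) :=
  {τ | τ.card = k + 1 ∧ ↑τ ⊆ P ∧
    AffineIndependent ℝ (fun q : (τ : Set (EuclideanSpace ℝ (Fin d))) =>
      (q : EuclideanSpace ℝ (Fin d)))}

/-- `(z,u)` is the orthosphere of `τ` with respect to the weight function `w`. -/
def IsOrthosphere (τ : Finset (EuclideanSpace ℝ (Fin d)))
    (w : EuclideanSpace ℝ (Fin d) → ℝ) (z : EuclideanSpace ℝ (Fin d)) (u : ℝ) : Prop :=
  z ∈ affineSpan ℝ (↑τ : Set (EuclideanSpace ℝ (Fin d))) ∧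
    ∀ p ∈ τ, ‖z - p‖ ^ 2 = u + w p

/-- `(z,u)` is empty in `(P,w)`. -/
def IsEmptySphere (P : Set (EuclideanSpace ℝ (Fin d)))
    (w : EuclideanSpace ℝ (Fin d) → ℝ) (z : EuclideanSpace ℝ (Fin d)) (u : ℝ) : Prop :=
  ∀ p ∈ P, 0 ≤ ‖z - p‖ ^ 2 - u - w p

/-- The set `𝒲` of weight functions on `P`: `0 ≤ w(p) ≤ (M/3)²` for `p ∈ P`. -/
def WeightFns (M : ℝ) (P : Set (EuclideanSpace ℝ (Fin d))) :
    Set (EuclideanSpace ℝ (Fin d) → ℝ) :=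
  {w | ∀ p ∈ P, w p ∈ Set.Icc (0 : ℝ) ((M / 3) ^ 2)}

/-- `Del(P,w)`: elements of `Δ_d(P)` whose orthosphere with respect to `w`
is empty in `(P,w)`. -/
def Del (P : Set (EuclideanSpace ℝ (Fin d))) (w : EuclideanSpace ℝ (Fin d) → ℝ) :
    Set (Finset (EuclideanSpace ℝ (Fin d))) :=
  {τ | τ ∈ DeltaK d P ∧ ∃ z u, IsOrthosphere τ w z u ∧ IsEmptySphere P w z u}

/-!
Since the centre of an orthosphere lies in the affine span of `τ`, the orthosphere is unique,
so `(z,u)` is the empty one. By syndeticity some `p₀ ∈ P` has `‖z - p₀‖ < 2M`, and emptiness at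
`p₀` together with `w p₀ ≥ 0` gives `u < 4M²`. For `p ∈ τ` then
`‖z - p‖² = u + w p < 4M² + M²/9 < 5M²`, and the triangle inequality through `z` bounds the
diameter of `τ`.
-/

/-- Two centres satisfying the power equations differ by a vector orthogonal to
`vectorSpan τ`; as both lie in `affineSpan τ`, that difference also lies in `vectorSpan τ`. -/
theorem IsOrthosphere.unique {τ : Finset (EuclideanSpace ℝ (Fin d))}
    {w : EuclideanSpace ℝ (Fin d) → ℝ} {z z' : EuclideanSpace ℝ (Fin d)} {u u' : ℝ}
    (h : IsOrthosphere τ w z u) (h' : IsOrthosphere τ w z' u') : z = z' ∧ u = u' := by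
  have horth : ∀ v ∈ vectorSpan ℝ (τ : Set (EuclideanSpace ℝ (Fin d))),
      inner ℝ v (z' - z) = 0 := by
    intro v hv
    refine Submodule.span_induction ?_ (inner_zero_left _) (fun x y _ _ hx hy => ?_)
      (fun c x _ hx => ?_) hv
    · rintro _ ⟨p, hp, q, hq, rfl⟩
      have hpz := h.2 p hp
      have hpz' := h'.2 p hp
      have hqz := h.2 q hq
      have hqz' := h'.2 q hq
      rw [norm_sub_sq_real] at hpz hpz' hqz hqz'
      simp only [vsub_eq_sub, inner_sub_right, real_inner_comm z, real_inner_comm z']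
      linarith
    · rw [inner_add_left, hx, hy, add_zero]
    · rw [real_inner_smul_left, hx, mul_zero]
  have hmem : z' - z ∈ vectorSpan ℝ (τ : Set (EuclideanSpace ℝ (Fin d))) := by
    rw [← direction_affineSpan]
    exact AffineSubspace.vsub_mem_direction h'.1 h.1
  have hzz : z = z' := (sub_eq_zero.mp (inner_self_eq_zero.mp (horth _ hmem))).symm
  obtain ⟨p, hp⟩ : (τ : Set (EuclideanSpace ℝ (Fin d))).Nonempty :=
    (affineSpan_nonempty ℝ).mp ⟨z, h.1⟩
  refine ⟨hzz, ?_⟩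
  have := h.2 p hp
  rw [hzz, h'.2 p hp] at this
  linarith

theorem IsEmptySphere.lt_sq_of_dist_lt {P : Set (EuclideanSpace ℝ (Fin d))}
    {w : EuclideanSpace ℝ (Fin d) → ℝ} {z p : EuclideanSpace ℝ (Fin d)} {u r : ℝ}
    (he : IsEmptySphere P w z u) (hp : p ∈ P) (hwp : 0 ≤ w p) (hdist : dist z p < r) :
    u < r ^ 2 := by
  have hsq : ‖z - p‖ ^ 2 < r ^ 2 := by
    rw [← dist_eq_norm]
    exact pow_lt_pow_left₀ hdist dist_nonneg two_ne_zero
  linarith [he p hp]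

theorem stmt4_general (M : ℝ) (hM : 0 < M)
    (P : Set (EuclideanSpace ℝ (Fin d)))
    (hsyn : IsSyndeticSet (2 * M) P)
    (w : EuclideanSpace ℝ (Fin d) → ℝ) (hw : w ∈ WeightFns M P)
    (τ : Finset (EuclideanSpace ℝ (Fin d))) (hτ : τ ∈ Del P w)
    (z : EuclideanSpace ℝ (Fin d)) (u : ℝ) (ho : IsOrthosphere τ w z u) :
    u < 4 * M ^ 2 ∧ (∀ p ∈ τ, ‖z - p‖ ^ 2 < 5 * M ^ 2) ∧
      ∀ p ∈ τ, ∀ q ∈ τ, ‖p - q‖ < 2 * Real.sqrt 5 * M := by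
  obtain ⟨⟨-, hsub, -⟩, z', u', ho', hempty⟩ := hτ
  obtain ⟨rfl, rfl⟩ := ho.unique ho'
  obtain ⟨p₀, hp₀, hdist⟩ := hsyn z
  have hu : u < 4 * M ^ 2 := by
    linarith [hempty.lt_sq_of_dist_lt hp₀ (hw p₀ hp₀).1 hdist]
  have hball : ∀ p ∈ τ, ‖z - p‖ ^ 2 < 5 * M ^ 2 := fun p hp => by
    rw [ho.2 p hp]
    linarith [(hw p (hsub hp)).2, pow_pos hM 2]
  have hnorm : ∀ p ∈ τ, ‖z - p‖ < Real.sqrt 5 * M := fun p hp => by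
    rw [← Real.sqrt_sq hM.le, ← Real.sqrt_mul (by norm_num)]
    exact (Real.lt_sqrt (norm_nonneg _)).mpr (hball p hp)
  refine ⟨hu, hball, fun p hp q hq => ?_⟩
  calc ‖p - q‖ = ‖(z - q) - (z - p)‖ := by rw [sub_sub_sub_cancel_left]
    _ ≤ ‖z - q‖ + ‖z - p‖ := norm_sub_le _ _
    _ < 2 * Real.sqrt 5 * M := by linarith [hnorm p hp, hnorm q hq]

/-- If `P ⊆ ℝ^d` is `M`-separated and `2M`-syndetic, `w ∈ 𝒲` and `τ ∈ Del(P,w)`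
has orthosphere `(z,u)`, then `u < 4M²`, `‖z - p‖² < 5M²` for every `p ∈ τ`,
and `‖p - q‖ < 2√5·M` for all `p, q ∈ τ`. -/
theorem stmt4 (hd : 1 ≤ d) (M : ℝ) (hM : 0 < M)
    (P : Set (EuclideanSpace ℝ (Fin d)))
    (hsep : IsSeparatedSet M P) (hsyn : IsSyndeticSet (2 * M) P)
    (w : EuclideanSpace ℝ (Fin d) → ℝ) (hw : w ∈ WeightFns M P)
    (τ : Finset (EuclideanSpace ℝ (Fin d))) (hτ : τ ∈ Del P w)
    (z : EuclideanSpace ℝ (Fin d)) (u : ℝ) (ho : IsOrthosphere τ w z u) :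
    u < 4 * M ^ 2 ∧ (∀ p ∈ τ, ‖z - p‖ ^ 2 < 5 * M ^ 2) ∧
      ∀ p ∈ τ, ∀ q ∈ τ, ‖p - q‖ < 2 * Real.sqrt 5 * M :=
  stmt4_general M hM P hsyn w hw τ hτ z u ho
end
end

section
/- Let d ≥ 1, M > 0, let P ⊆ ℝ^d be M-separated and 2M-syndetic, and let 1 ≤ k ≤ d. Suppose p₁, p₂ ∈ P satisfy (P − p₁) ∩ B(0, 2√5·M) = (P − p₂) ∩ B(0, 2√5·M). If τ ∈ D_k contains p₁, then τ − p₁ + p₂ ∈ D_k. -/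
noncomputable section

open scoped Classical

open Metric

variable {d : ℕ}

/-- `D_k`: those `τ ∈ Δ_k(P)` contained in some `τ' ∈ Del(P,w)` for some `w ∈ 𝒲`. -/
def DSet (M : ℝ) (P : Set (EuclideanSpace ℝ (Fin d))) (k : ℕ) :
    Set (Finset (EuclideanSpace ℝ (Fin d))) :=
  {τ | τ ∈ DeltaK k P ∧ ∃ w ∈ WeightFns M P, ∃ τ' ∈ Del P w, τ ⊆ τ'}

/-!
The orthosphere `(z, u)` of a cell `τ' ∈ Del(P, w)` is empty, so `2M`-syndeticity gives
`u < (2M)²`; hence every vertex of `τ'`, and every point of `P` that could violate emptiness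
after a translation, lies within `√5·M` of the centre (as `4 + 1/9 ≤ 5`). All of `τ'` therefore
lies in the ball of radius `2√5·M` around `p₁`, where `P` agrees with its translate by
`t = p₂ - p₁`. Translating the cell, its centre and its weights by `t` gives a cell of
`Del(P, w')` containing `τ + t`, where `w'` is the translate of `w`, extended by `0`.
-/

open Finset

section Pattern

variable {E : Type*} [SeminormedAddCommGroup E]

theorem add_sub_mem_of_image_sub_inter_ball_eq {P : Set E} {p₁ p₂ : E} {R : ℝ}
    (hpat : ((fun q => q - p₁) '' P) ∩ ball 0 R = ((fun q => q - p₂) '' P) ∩ ball 0 R)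
    {q : E} (hq : q ∈ P) (hqp₁ : dist q p₁ < R) : q + (p₂ - p₁) ∈ P := by
  have hmem : q - p₁ ∈ ((fun q => q - p₂) '' P) ∩ ball 0 R := by
    rw [← hpat]
    exact ⟨⟨q, hq, rfl⟩, by rwa [mem_ball, dist_zero_right, ← dist_eq_norm]⟩
  obtain ⟨q', hq', hq'eq : q' - p₂ = q - p₁⟩ := hmem.1
  rwa [show q + (p₂ - p₁) = q' by rw [← sub_add_cancel q' p₂, hq'eq]; abel]

end Pattern

section Translation

variable {P : Set (EuclideanSpace ℝ (Fin d))} (t : EuclideanSpace ℝ (Fin d))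

theorem image_add_mem_deltaK {k : ℕ} {s : Finset (EuclideanSpace ℝ (Fin d))}
    (hs : s ∈ DeltaK k P) (hst : ∀ q ∈ s, q + t ∈ P) : s.image (· + t) ∈ DeltaK k P := by
  obtain ⟨hcard, -, hind⟩ := hs
  have himage : ((s.image (· + t) : Finset _) : Set (EuclideanSpace ℝ (Fin d))) =
      AffineEquiv.vaddConst ℝ t '' (s : Set _) := coe_image
  refine ⟨?_, ?_, ?_⟩
  · rw [card_image_of_injective _ (add_left_injective t), hcard]
  · rw [coe_image]
    rintro _ ⟨q, hq, rfl⟩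
    exact hst q hq
  · rw [himage]
    exact (AffineEquiv.affineIndependent_set_of_eq_iff _).mpr hind

theorem IsOrthosphere.image_add {τ : Finset (EuclideanSpace ℝ (Fin d))}
    {w w' : EuclideanSpace ℝ (Fin d) → ℝ} {z : EuclideanSpace ℝ (Fin d)} {u : ℝ}
    (h : IsOrthosphere τ w z u) (hw' : ∀ q ∈ τ, w' (q + t) = w q) :
    IsOrthosphere (τ.image (· + t)) w' (z + t) u := by
  obtain ⟨hz, hsph⟩ := h
  refine ⟨?_, ?_⟩
  · rw [coe_image, show (· + t) '' (τ : Set _) = (AffineEquiv.vaddConst ℝ t).toAffineMap '' τ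
      from rfl, ← AffineSubspace.map_span]
    exact AffineSubspace.mem_map.mpr ⟨z, hz, rfl⟩
  · simp only [mem_image]
    rintro _ ⟨q, hq, rfl⟩
    rw [add_sub_add_right_eq_sub, hw' q hq]
    exact hsph q hq

def translateWeight (P : Set (EuclideanSpace ℝ (Fin d))) (w : EuclideanSpace ℝ (Fin d) → ℝ)
    (p : EuclideanSpace ℝ (Fin d)) : ℝ :=
  if p - t ∈ P then w (p - t) else 0

theorem translateWeight_add {w : EuclideanSpace ℝ (Fin d) → ℝ} {q : EuclideanSpace ℝ (Fin d)}
    (hq : q ∈ P) : translateWeight t P w (q + t) = w q := by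
  simp [translateWeight, hq]

theorem translateWeight_mem_weightFns {M : ℝ} {w : EuclideanSpace ℝ (Fin d) → ℝ}
    (hw : w ∈ WeightFns M P) : translateWeight t P w ∈ WeightFns M P := by
  intro p _
  unfold translateWeight
  split_ifs with hp
  · exact hw _ hp
  · exact ⟨le_rfl, by positivity⟩

theorem IsEmptySphere.translateWeight {w : EuclideanSpace ℝ (Fin d) → ℝ}
    {z : EuclideanSpace ℝ (Fin d)} {u : ℝ} (hemp : IsEmptySphere P w z u)
    (hviol : ∀ p ∈ P, ‖z + t - p‖ ^ 2 < u → p - t ∈ P) :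
    IsEmptySphere P (translateWeight t P w) (z + t) u := by
  intro p hp
  unfold _root_.translateWeight
  split_ifs with hpt
  · rw [show z + t - p = z - (p - t) by abel]
    exact hemp _ hpt
  · by_contra! hneg
    exact hpt (hviol p hp (by linarith))

end Translation

section Radius

variable {P : Set (EuclideanSpace ℝ (Fin d))} {w : EuclideanSpace ℝ (Fin d) → ℝ}
  {z : EuclideanSpace ℝ (Fin d)} {u : ℝ}

theorem IsEmptySphere.lt_sq_of_isSyndeticSet {R : ℝ} (hemp : IsEmptySphere P w z u)
    (hw : ∀ p ∈ P, 0 ≤ w p) (hsyn : IsSyndeticSet R P) : u < R ^ 2 := by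
  obtain ⟨q, hq, hzq⟩ := hsyn z
  have hlt : ‖z - q‖ ^ 2 < R ^ 2 :=
    pow_lt_pow_left₀ (by rwa [← dist_eq_norm]) (norm_nonneg _) two_ne_zero
  linarith [hemp q hq, hw q hq]

theorem dist_lt_sqrt_five_mul_of_sq_le {M : ℝ} (hM : 0 < M) (hu : u < (2 * M) ^ 2)
    {p : EuclideanSpace ℝ (Fin d)} (hp : ‖z - p‖ ^ 2 ≤ u + (M / 3) ^ 2) :
    dist p z < √5 * M := by
  rw [dist_comm, dist_eq_norm]
  refine lt_of_pow_lt_pow_left₀ 2 (by positivity) ?_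
  rw [mul_pow, Real.sq_sqrt (by norm_num)]
  nlinarith

end Radius

theorem stmt5_general (M : ℝ) (hM : 0 < M)
    (P : Set (EuclideanSpace ℝ (Fin d)))
    (hsyn : IsSyndeticSet (2 * M) P)
    (k : ℕ)
    (p₁ p₂ : EuclideanSpace ℝ (Fin d))
    (hpat : ((fun q => q - p₁) '' P) ∩ ball (0 : EuclideanSpace ℝ (Fin d)) (2 * Real.sqrt 5 * M)
      = ((fun q => q - p₂) '' P) ∩ ball (0 : EuclideanSpace ℝ (Fin d)) (2 * Real.sqrt 5 * M))
    (τ : Finset (EuclideanSpace ℝ (Fin d))) (hτ : τ ∈ DSet M P k) (hmem : p₁ ∈ τ) :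
    τ.image (fun q => q - p₁ + p₂) ∈ DSet M P k := by
  obtain ⟨hτΔ, w, hw, τ', ⟨hτ'Δ, z, u, hzu, hemp⟩, hττ'⟩ := hτ
  set t := p₂ - p₁ with ht
  have hshift : (fun q => q - p₁ + p₂) = (· + t) := funext fun q => by rw [ht]; abel
  have hτ'P : ∀ q ∈ τ', q ∈ P := fun q hq => hτ'Δ.2.1 hq
  have hu : u < (2 * M) ^ 2 := hemp.lt_sq_of_isSyndeticSet (fun p hp => (hw p hp).1) hsyn
  have hnear : ∀ q ∈ τ', dist q z < √5 * M := fun q hq =>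
    dist_lt_sqrt_five_mul_of_sq_le hM hu (by rw [hzu.2 q hq]; linarith [(hw q (hτ'P q hq)).2])
  have hτ't : ∀ q ∈ τ', q + t ∈ P := fun q hq => by
    refine add_sub_mem_of_image_sub_inter_ball_eq hpat (hτ'P q hq) ?_
    linarith [dist_triangle_right q p₁ z, hnear q hq, hnear p₁ (hττ' hmem)]
  have hviol : ∀ p ∈ P, ‖z + t - p‖ ^ 2 < u → p - t ∈ P := fun p hp hp' => by
    have hpz : dist p (z + t) < √5 * M :=
      dist_lt_sqrt_five_mul_of_sq_le hM hu (by linarith [sq_nonneg (M / 3)])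
    have hcentre : dist (z + t) p₂ = dist z p₁ := by
      rw [dist_eq_norm, dist_eq_norm, ht]
      congr 1
      abel
    rw [show p - t = p + (p₁ - p₂) by rw [ht]; abel]
    refine add_sub_mem_of_image_sub_inter_ball_eq hpat.symm hp ?_
    linarith [dist_triangle p (z + t) p₂, hnear p₁ (hττ' hmem), dist_comm z p₁, hcentre]
  rw [hshift]
  refine ⟨image_add_mem_deltaK t hτΔ fun q hq => hτ't q (hττ' hq), translateWeight t P w,
    translateWeight_mem_weightFns t hw, τ'.image (· + t),
    ⟨image_add_mem_deltaK t hτ'Δ hτ't, z + t, u,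
      hzu.image_add t fun q hq => translateWeight_add t (hτ'P q hq), hemp.translateWeight t hviol⟩,
    image_subset_image hττ'⟩

/-- `D_k` is locally derived from `P`: if `p₁, p₂ ∈ P` have the same pattern of `P`
in the ball of radius `2√5·M`, and `τ ∈ D_k` contains `p₁`, then `τ - p₁ + p₂ ∈ D_k`. -/
theorem stmt5 (hd : 1 ≤ d) (M : ℝ) (hM : 0 < M)
    (P : Set (EuclideanSpace ℝ (Fin d)))
    (hsep : IsSeparatedSet M P) (hsyn : IsSyndeticSet (2 * M) P)
    (k : ℕ) (hk1 : 1 ≤ k) (hkd : k ≤ d)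
    (p₁ p₂ : EuclideanSpace ℝ (Fin d)) (hp₁ : p₁ ∈ P) (hp₂ : p₂ ∈ P)
    (hpat : ((fun q => q - p₁) '' P) ∩ ball (0 : EuclideanSpace ℝ (Fin d)) (2 * Real.sqrt 5 * M)
      = ((fun q => q - p₂) '' P) ∩ ball (0 : EuclideanSpace ℝ (Fin d)) (2 * Real.sqrt 5 * M))
    (τ : Finset (EuclideanSpace ℝ (Fin d))) (hτ : τ ∈ DSet M P k) (hmem : p₁ ∈ τ) :
    τ.image (fun q => q - p₁ + p₂) ∈ DSet M P k :=
  stmt5_general M hM P hsyn k p₁ p₂ hpat τ hτ hmem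
end
end

section
/- Let d ≥ 2, M > 0, let P ⊆ ℝ^d be M-separated and 2M-syndetic, and let 1 ≤ k ≤ d−1. For any p ∈ P, any τ ∈ D_k with τ ∪ {p} ∈ D_{k+1}, and any map λ : τ → [0,(M/3)²], there exists an open interval I(p,τ,λ) ⊆ ℝ such that: (1) if there exist w ∈ 𝒲 and τ̃ ∈ Del(P,w) with w(q) = λ(q) for all q ∈ τ and τ ∪ {p} ⊆ τ̃, then w(p) ∈ I(p,τ,λ); (2) the length of I(p,τ,λ) equals 8M·dist(p, H(τ)); (3) if p_i ∈ P, τ_i ∈ D_k with τ_i ∪ {p_i} ∈ D_{k+1} and λ_i : τ_i → [0,(M/3)²] for i = 1,2, and there exists t ∈ ℝ^d with τ₁ + t = τ₂, p₁ + t = p₂ and λ₁(q) = λ₂(q+t) for all q ∈ τ₁, then I(p₁,τ₁,λ₁) = I(p₂,τ₂,λ₂). -/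
/-!
Take `I(p, τ, λ)` to be the open interval of radius `4M·h`, `h = d(p, H(τ))`, around the power
`‖z₀ - p‖² - u₀` of `p` with respect to the orthosphere `(z₀, u₀)` of `τ` for `λ`. If `(z, u)` is
the orthosphere of a cell `τ' ⊇ τ ∪ {p}` of `Del(P, w)`, Pythagoras shows that `z₀` is the
orthogonal projection of `z` onto `H(τ)` and `u₀ = u - ‖z - z₀‖²`, so that
`w(p) - (‖z₀ - p‖² - u₀) = 2⟪z - z₀, z₀ - p⟫`, of absolute value at most `2‖z - z₀‖·h`.
Emptiness and `2M`-syndeticity give `u < 4M²`, and two `M`-separated points of `τ` with weights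
at most `(M/3)²` give `u₀ ≥ 0`; hence `‖z - z₀‖ < 2M`. Translation invariance is inherited from
that of orthospheres and of distances.
-/

noncomputable section

open scoped Classical

open Metric

variable {d : ℕ}

open scoped RealInnerProductSpace Pointwise

open EuclideanGeometry

lemma coe_affineSpan_image_add_right {k V : Type*} [Ring k] [AddCommGroup V] [Module k V]
    (s : Set V) (t : V) :
    (affineSpan k ((· + t) '' s) : Set V) = (· + t) '' affineSpan k s := by
  have h (s : Set V) : (· + t) '' s = t +ᵥ s := by
    simp only [← Set.image_vadd, vadd_eq_add, add_comm t]
  rw [h, h, ← AffineSubspace.pointwise_vadd_span, AffineSubspace.coe_pointwise_vadd]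

section InnerProductSpace

variable {V : Type*} [NormedAddCommGroup V] [InnerProductSpace ℝ V]

lemma inner_eq_of_mem_affineSpan {v : V} {β : ℝ} {s : Set V} (h : ∀ q ∈ s, ⟪v, q⟫ = β)
    {x : V} (hx : x ∈ affineSpan ℝ s) : ⟪v, x⟫ = β := by
  refine affineSpan_induction hx h fun c a b y ha hb hy => ?_
  simp only [vsub_eq_sub, vadd_eq_add, inner_add_right, inner_sub_right, real_inner_smul_right,
    ha, hb, hy]
  ring

lemma abs_inner_sub_orthogonalProjection_le (S : AffineSubspace ℝ V) [Nonempty S]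
    [S.direction.HasOrthogonalProjection] (z p : V) {x : V} (hx : x ∈ S) :
    |⟪z - (orthogonalProjection S z : V), x - p⟫| ≤
      ‖z - (orthogonalProjection S z : V)‖ * infDist p S := by
  set z₀ : V := (orthogonalProjection S z : V)
  set p' : V := (orthogonalProjection S p : V)
  have hperp : ⟪z - z₀, x - p'⟫ = 0 :=
    Submodule.inner_left_of_mem_orthogonal
      (S.vsub_mem_direction hx (orthogonalProjection_mem p))
      (vsub_orthogonalProjection_mem_direction_orthogonal S z)
  calc |⟪z - z₀, x - p⟫| = |⟪z - z₀, p' - p⟫| := by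
        rw [← sub_add_sub_cancel x p' p, inner_add_right, hperp, zero_add]
    _ ≤ ‖z - z₀‖ * ‖p' - p‖ := abs_real_inner_le_norm _ _
    _ = ‖z - z₀‖ * infDist p S := by
        rw [← dist_orthogonalProjection_eq_infDist, dist_comm, dist_eq_norm]

lemma infDist_add_right_affineSpan_image (s : Set V) (p t : V) :
    infDist (p + t) (affineSpan ℝ ((· + t) '' s)) = infDist p (affineSpan ℝ s) := by
  rw [coe_affineSpan_image_add_right]
  exact infDist_image (isometry_add_right t)

end InnerProductSpace

lemma AffineIndependent.notMem_affineSpan_of_insert {k V P : Type*} [Ring k] [Nontrivial k]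
    [AddCommGroup V] [Module k V] [AddTorsor V P] {s : Set P} {p : P}
    (h : AffineIndependent k (fun q : (insert p s : Set P) => (q : P))) (hp : p ∉ s) :
    p ∉ affineSpan k s := by
  have := h.notMem_affineSpan_sdiff ⟨p, s.mem_insert p⟩ Set.univ
  rwa [Set.image_val_sdiff, Set.image_univ, Subtype.range_coe, Set.image_singleton,
    Set.insert_sdiff_self_of_notMem hp] at this

section Orthosphere

variable {P : Set (EuclideanSpace ℝ (Fin d))} {τ τ' : Finset (EuclideanSpace ℝ (Fin d))}
  {w w' lam : EuclideanSpace ℝ (Fin d) → ℝ} {z z' p t : EuclideanSpace ℝ (Fin d)} {u u' M R : ℝ}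

namespace IsOrthosphere

lemma eq (hτ : τ.Nonempty) (h : IsOrthosphere τ w z u) (h' : IsOrthosphere τ w z' u') :
    z = z' ∧ u = u' := by
  have hβ : ∀ q ∈ (τ : Set (EuclideanSpace ℝ (Fin d))),
      ⟪z - z', q⟫ = (‖z‖ ^ 2 - ‖z'‖ ^ 2 - (u - u')) / 2 := by
    intro q hq
    have e := h.2 q hq
    have e' := h'.2 q hq
    rw [norm_sub_sq_real] at e e'
    rw [inner_sub_left]
    linarith
  have hzz' : z = z' := by
    rw [← sub_eq_zero, ← inner_self_eq_zero (𝕜 := ℝ), inner_sub_right,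
      inner_eq_of_mem_affineSpan hβ h.1, inner_eq_of_mem_affineSpan hβ h'.1, sub_self]
  subst hzz'
  obtain ⟨q, hq⟩ := hτ
  exact ⟨rfl, by linarith [h.2 q hq, h'.2 q hq]⟩

lemma add_right (hw : ∀ q ∈ τ, w q = w' (q + t)) (h : IsOrthosphere τ w z u) :
    IsOrthosphere (τ.image (· + t)) w' (z + t) u := by
  refine ⟨?_, ?_⟩
  · rw [Finset.coe_image, ← SetLike.mem_coe, coe_affineSpan_image_add_right]
    exact Set.mem_image_of_mem _ h.1
  · simp only [Finset.forall_mem_image, add_sub_add_right_eq_sub]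
    intro q hq
    rw [h.2 q hq, hw q hq]

lemma orthogonalProjection (h : IsOrthosphere τ' w z u) (hττ' : τ ⊆ τ')
    (hw : ∀ q ∈ τ, w q = lam q) [Nonempty (affineSpan ℝ (τ : Set (EuclideanSpace ℝ (Fin d))))] :
    IsOrthosphere τ lam
      (orthogonalProjection (affineSpan ℝ (τ : Set (EuclideanSpace ℝ (Fin d)))) z)
      (u - ‖z - orthogonalProjection (affineSpan ℝ (τ : Set (EuclideanSpace ℝ (Fin d)))) z‖ ^ 2) :=
    by
  refine ⟨orthogonalProjection_mem z, fun q hq => ?_⟩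
  have hpyth := dist_sq_eq_dist_orthogonalProjection_sq_add_dist_orthogonalProjection_sq z
    (subset_affineSpan ℝ (τ : Set (EuclideanSpace ℝ (Fin d))) hq)
  simp only [dist_eq_norm, ← sq, norm_sub_rev q] at hpyth
  linarith [h.2 q (hττ' hq), hw q hq]

lemma nonneg_of_isSeparatedSet (hM : 0 ≤ M) (hsep : IsSeparatedSet M P) (hτP : ↑τ ⊆ P)
    (hτ : 1 < τ.card) (hw : ∀ q ∈ τ, w q ≤ (M / 3) ^ 2) (h : IsOrthosphere τ w z u) :
    0 ≤ u := by
  obtain ⟨q₁, hq₁, q₂, hq₂, hne⟩ := Finset.one_lt_card.1 hτ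
  have hM₁₂ : M ≤ ‖z - q₁‖ + ‖z - q₂‖ := by
    calc M ≤ dist q₁ q₂ := hsep q₁ (hτP hq₁) q₂ (hτP hq₂) hne
      _ ≤ dist q₁ z + dist z q₂ := dist_triangle q₁ z q₂
      _ = ‖z - q₁‖ + ‖z - q₂‖ := by rw [dist_comm, dist_eq_norm, dist_eq_norm]
  nlinarith [h.2 q₁ hq₁, h.2 q₂ hq₂, hw q₁ hq₁, hw q₂ hq₂, mul_self_le_mul_self hM hM₁₂,
    sq_nonneg (‖z - q₁‖ - ‖z - q₂‖)]

end IsOrthosphere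

lemma IsEmptySphere.lt_sq (hsyn : IsSyndeticSet R P) (hw : ∀ q ∈ P, 0 ≤ w q)
    (h : IsEmptySphere P w z u) : u < R ^ 2 := by
  obtain ⟨q, hq, hzq⟩ := hsyn z
  rw [dist_eq_norm] at hzq
  nlinarith [h q hq, hw q hq, norm_nonneg (z - q)]

-- Junk value `0` when `τ` has no orthosphere for `w`.
def orthospherePower (p : EuclideanSpace ℝ (Fin d)) (τ : Finset (EuclideanSpace ℝ (Fin d)))
    (w : EuclideanSpace ℝ (Fin d) → ℝ) : ℝ :=
  if h : ∃ zu : EuclideanSpace ℝ (Fin d) × ℝ, IsOrthosphere τ w zu.1 zu.2 then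
    ‖h.choose.1 - p‖ ^ 2 - h.choose.2
  else 0

lemma IsOrthosphere.orthospherePower_eq (hτ : τ.Nonempty) (h : IsOrthosphere τ w z u) :
    orthospherePower p τ w = ‖z - p‖ ^ 2 - u := by
  have hex : ∃ zu : EuclideanSpace ℝ (Fin d) × ℝ, IsOrthosphere τ w zu.1 zu.2 := ⟨(z, u), h⟩
  obtain ⟨rfl, rfl⟩ := hex.choose_spec.eq hτ h
  rw [orthospherePower, dif_pos hex]

lemma orthospherePower_add_right (hτ : τ.Nonempty) (hw : ∀ q ∈ τ, w q = w' (q + t)) :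
    orthospherePower (p + t) (τ.image (· + t)) w' = orthospherePower p τ w := by
  by_cases hex : ∃ zu : EuclideanSpace ℝ (Fin d) × ℝ, IsOrthosphere τ w zu.1 zu.2
  · obtain ⟨⟨z, u⟩, h⟩ := hex
    rw [(h.add_right hw).orthospherePower_eq (hτ.image _), h.orthospherePower_eq hτ,
      add_sub_add_right_eq_sub]
  · have hex' : ¬∃ zu : EuclideanSpace ℝ (Fin d) × ℝ,
        IsOrthosphere (τ.image (· + t)) w' zu.1 zu.2 := by
      rintro ⟨⟨z, u⟩, h⟩
      refine hex ⟨(z + -t, u), ?_⟩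
      have hw' : ∀ q ∈ τ.image (· + t), w' q = w (q + -t) := by
        simp only [Finset.forall_mem_image, add_neg_cancel_right]
        exact fun q hq => (hw q hq).symm
      simpa only [Finset.image_image, Function.comp_def, add_neg_cancel_right, Finset.image_id']
        using h.add_right hw'
    rw [orthospherePower, orthospherePower, dif_neg hex, dif_neg hex']

lemma dist_orthospherePower_lt (hM : 0 < M) (hsep : IsSeparatedSet M P)
    (hsyn : IsSyndeticSet (2 * M) P) (hτP : ↑τ ⊆ P) (hτ : 1 < τ.card) (hw : w ∈ WeightFns M P)
    (hwlam : ∀ q ∈ τ, w q = lam q) (hτ' : τ' ∈ Del P w) (hpτ' : insert p τ ⊆ τ')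
    (hp : p ∉ affineSpan ℝ (τ : Set (EuclideanSpace ℝ (Fin d)))) :
    dist (w p) (orthospherePower p τ lam) <
      4 * M * infDist p (affineSpan ℝ (τ : Set (EuclideanSpace ℝ (Fin d)))) := by
  obtain ⟨-, z, u, hz, hempty⟩ := hτ'
  set S := affineSpan ℝ (τ : Set (EuclideanSpace ℝ (Fin d)))
  have hτne : τ.Nonempty := Finset.card_pos.1 (by omega)
  have hS : (S : Set (EuclideanSpace ℝ (Fin d))).Nonempty :=
    hτne.to_set.mono (subset_affineSpan ℝ _)
  have : Nonempty S := hS.to_subtype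
  set z₀ : EuclideanSpace ℝ (Fin d) := (orthogonalProjection S z : EuclideanSpace ℝ (Fin d))
  have hz₀ : IsOrthosphere τ lam z₀ (u - ‖z - z₀‖ ^ 2) :=
    hz.orthogonalProjection ((Finset.subset_insert p τ).trans hpτ') hwlam
  have hu₀ : 0 ≤ u - ‖z - z₀‖ ^ 2 :=
    hz₀.nonneg_of_isSeparatedSet hM.le hsep hτP hτ fun q hq => hwlam q hq ▸ (hw q (hτP hq)).2
  have hu : u < (2 * M) ^ 2 := hempty.lt_sq hsyn fun q hq => (hw q hq).1
  have hzz₀ : ‖z - z₀‖ < 2 * M := lt_of_pow_lt_pow_left₀ 2 (by positivity) (by linarith)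
  have hwp : w p = ‖z - p‖ ^ 2 - u := by linarith [hz.2 p (hpτ' (Finset.mem_insert_self p τ))]
  have hsplit : w p - orthospherePower p τ lam = 2 * ⟪z - z₀, z₀ - p⟫ := by
    rw [hz₀.orthospherePower_eq hτne, hwp, ← sub_add_sub_cancel z z₀ p, norm_add_sq_real]
    ring
  have hh : 0 < infDist p S := (S.closed_of_finiteDimensional.notMem_iff_infDist_pos hS).1 hp
  calc dist (w p) (orthospherePower p τ lam) = 2 * |⟪z - z₀, z₀ - p⟫| := by
        rw [Real.dist_eq, hsplit, abs_mul, abs_two]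
    _ ≤ 2 * (‖z - z₀‖ * infDist p S) := by
        gcongr
        exact abs_inner_sub_orthogonalProjection_le S z p (orthogonalProjection_mem z)
    _ < 4 * M * infDist p S := by nlinarith

end Orthosphere

theorem stmt6_general (M : ℝ) (hM : 0 < M)
    (P : Set (EuclideanSpace ℝ (Fin d)))
    (hsep : IsSeparatedSet M P) (hsyn : IsSyndeticSet (2 * M) P)
    (k : ℕ) (hk1 : 1 ≤ k) :
    ∃ I : EuclideanSpace ℝ (Fin d) → Finset (EuclideanSpace ℝ (Fin d)) →
        (EuclideanSpace ℝ (Fin d) → ℝ) → Set ℝ,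
      (∀ (p : EuclideanSpace ℝ (Fin d)) (τ : Finset (EuclideanSpace ℝ (Fin d)))
          (lam : EuclideanSpace ℝ (Fin d) → ℝ),
        p ∈ P → τ ∈ DSet M P k → insert p τ ∈ DSet M P (k + 1) →
        (∀ q ∈ τ, lam q ∈ Set.Icc (0 : ℝ) ((M / 3) ^ 2)) →
        -- (1)
        ((∀ w ∈ WeightFns M P, (∀ q ∈ τ, w q = lam q) →
            (∃ τ' ∈ Del P w, insert p τ ⊆ τ') → w p ∈ I p τ lam) ∧
        -- (2): `I p τ lam` is an open interval of length `8M·d(p,H(τ))`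
          ∃ a b : ℝ, I p τ lam = Set.Ioo a b ∧
            b - a = 8 * M *
              Metric.infDist p (affineSpan ℝ (↑τ : Set (EuclideanSpace ℝ (Fin d)))
                : Set (EuclideanSpace ℝ (Fin d))))) ∧
      -- (3): translation invariance
      (∀ (p₁ p₂ : EuclideanSpace ℝ (Fin d))
          (τ₁ τ₂ : Finset (EuclideanSpace ℝ (Fin d)))
          (lam₁ lam₂ : EuclideanSpace ℝ (Fin d) → ℝ),
        p₁ ∈ P → τ₁ ∈ DSet M P k → insert p₁ τ₁ ∈ DSet M P (k + 1) →
        (∀ q ∈ τ₁, lam₁ q ∈ Set.Icc (0 : ℝ) ((M / 3) ^ 2)) →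
        p₂ ∈ P → τ₂ ∈ DSet M P k → insert p₂ τ₂ ∈ DSet M P (k + 1) →
        (∀ q ∈ τ₂, lam₂ q ∈ Set.Icc (0 : ℝ) ((M / 3) ^ 2)) →
        (∃ t : EuclideanSpace ℝ (Fin d), τ₁.image (fun q => q + t) = τ₂ ∧
          p₁ + t = p₂ ∧ ∀ q ∈ τ₁, lam₁ q = lam₂ (q + t)) →
        I p₁ τ₁ lam₁ = I p₂ τ₂ lam₂) := by
  refine ⟨fun p τ lam => ball (orthospherePower p τ lam)
      (4 * M * infDist p (affineSpan ℝ (τ : Set (EuclideanSpace ℝ (Fin d))))), ?_, ?_⟩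
  · rintro p τ lam - ⟨⟨hcard, hτP, -⟩, -⟩ ⟨⟨hcard', -, hind⟩, -⟩ -
    have hpτ : p ∉ τ := fun h => by rw [Finset.insert_eq_of_mem h] at hcard'; omega
    rw [Finset.coe_insert] at hind
    refine ⟨fun w hw hwlam ⟨τ', hτ', hpτ'⟩ => ?_, _, _, Real.ball_eq_Ioo _ _, by ring⟩
    exact dist_orthospherePower_lt hM hsep hsyn hτP (by omega) hw hwlam hτ' hpτ'
      (hind.notMem_affineSpan_of_insert hpτ)
  · rintro p₁ - τ₁ - lam₁ lam₂ - ⟨⟨hcard, -, -⟩, -⟩ - - - - - - ⟨t, rfl, rfl, hlam⟩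
    have hτ₁ : τ₁.Nonempty := Finset.card_pos.1 (by omega)
    simp only [orthospherePower_add_right hτ₁ hlam, Finset.coe_image,
      infDist_add_right_affineSpan_image]

/-- Existence of the intervals `I(p,τ,λ)`: for each `p ∈ P`, `τ ∈ D_k` with
`τ ∪ {p} ∈ D_{k+1}` and `λ : τ → [0,(M/3)²]`, there is an open interval
`I(p,τ,λ) ⊆ ℝ` such that (1) any weight function `w ∈ 𝒲` extending `λ` admitting
a cell of `Del(P,w)` containing `τ ∪ {p}` satisfies `w(p) ∈ I(p,τ,λ)`;
(2) the length of `I(p,τ,λ)` is `8M·d(p,H(τ))`; and (3) the assignment is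
translation invariant. -/
theorem stmt6 (hd : 2 ≤ d) (M : ℝ) (hM : 0 < M)
    (P : Set (EuclideanSpace ℝ (Fin d)))
    (hsep : IsSeparatedSet M P) (hsyn : IsSyndeticSet (2 * M) P)
    (k : ℕ) (hk1 : 1 ≤ k) (hkd : k ≤ d - 1) :
    ∃ I : EuclideanSpace ℝ (Fin d) → Finset (EuclideanSpace ℝ (Fin d)) →
        (EuclideanSpace ℝ (Fin d) → ℝ) → Set ℝ,
      (∀ (p : EuclideanSpace ℝ (Fin d)) (τ : Finset (EuclideanSpace ℝ (Fin d)))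
          (lam : EuclideanSpace ℝ (Fin d) → ℝ),
        p ∈ P → τ ∈ DSet M P k → insert p τ ∈ DSet M P (k + 1) →
        (∀ q ∈ τ, lam q ∈ Set.Icc (0 : ℝ) ((M / 3) ^ 2)) →
        -- (1)
        ((∀ w ∈ WeightFns M P, (∀ q ∈ τ, w q = lam q) →
            (∃ τ' ∈ Del P w, insert p τ ⊆ τ') → w p ∈ I p τ lam) ∧
        -- (2): `I p τ lam` is an open interval of length `8M·d(p,H(τ))`
          ∃ a b : ℝ, I p τ lam = Set.Ioo a b ∧
            b - a = 8 * M *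
              Metric.infDist p (affineSpan ℝ (↑τ : Set (EuclideanSpace ℝ (Fin d)))
                : Set (EuclideanSpace ℝ (Fin d))))) ∧
      -- (3): translation invariance
      (∀ (p₁ p₂ : EuclideanSpace ℝ (Fin d))
          (τ₁ τ₂ : Finset (EuclideanSpace ℝ (Fin d)))
          (lam₁ lam₂ : EuclideanSpace ℝ (Fin d) → ℝ),
        p₁ ∈ P → τ₁ ∈ DSet M P k → insert p₁ τ₁ ∈ DSet M P (k + 1) →
        (∀ q ∈ τ₁, lam₁ q ∈ Set.Icc (0 : ℝ) ((M / 3) ^ 2)) →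
        p₂ ∈ P → τ₂ ∈ DSet M P k → insert p₂ τ₂ ∈ DSet M P (k + 1) →
        (∀ q ∈ τ₂, lam₂ q ∈ Set.Icc (0 : ℝ) ((M / 3) ^ 2)) →
        (∃ t : EuclideanSpace ℝ (Fin d), τ₁.image (fun q => q + t) = τ₂ ∧
          p₁ + t = p₂ ∧ ∀ q ∈ τ₁, lam₁ q = lam₂ (q + t)) →
        I p₁ τ₁ lam₁ = I p₂ τ₂ lam₂) :=
  stmt6_general M hM P hsep hsyn k hk1
end
end

section
/- Let X ⊆ Ω be a flat Cantor transversal for a free minimal continuous action φ of ℝ^d on a compact metrizable space Ω. Then for any M > 0 there exist finitely many clopen subsets V₁,…,V_n of X which are pairwise disjoint, cover X, and satisfy V_i ∩ φ^p(V_i) = ∅ for every i = 1,…,n and every non-zero p ∈ B(0,M). -/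
noncomputable section

open Metric

variable {d : ℕ} {Ω : Type*} [TopologicalSpace Ω]

/-- `φ` is a continuous action of `ℝ^d` on `Ω` by homeomorphisms. -/
def IsCtsAction (φ : EuclideanSpace ℝ (Fin d) → Ω → Ω) : Prop :=
  Continuous (fun q : EuclideanSpace ℝ (Fin d) × Ω => φ q.1 q.2) ∧
    (∀ x, φ 0 x = x) ∧ ∀ p q x, φ (p + q) x = φ p (φ q x)

/-- The action `φ` is free. -/
def IsFreeAction (φ : EuclideanSpace ℝ (Fin d) → Ω → Ω) : Prop :=
  ∀ p x, φ p x = x → p = 0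

/-- The action `φ` is minimal: every orbit is dense. -/
def IsMinimalAction (φ : EuclideanSpace ℝ (Fin d) → Ω → Ω) : Prop :=
  ∀ x : Ω, Dense (Set.range fun p => φ p x)

/-- `U` is a clopen subset of `X` (in the subspace topology of `X`). -/
def ClopenIn (U X : Set Ω) : Prop :=
  U ⊆ X ∧ IsClopen (Subtype.val ⁻¹' U : Set X)

/-- `X ⊆ Ω` is a flat Cantor transversal for the free action `φ` of `ℝ^d` on `Ω`:
(1) `X` is a Cantor set (non-empty, closed — hence compact —, totally disconnected,
without isolated points); (2) every `φ`-orbit meets `X`; (3) there is `M > 0` such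
that `C = {φ^p(x) : x ∈ X, p ∈ B(0,M)}` is open and `(x,p) ↦ φ^p(x)` is a
homeomorphism from `X × B(0,M)` onto `C`; (4) the return times to `X` in a bounded
window are locally constant. -/
def FlatCantorTransversal (φ : EuclideanSpace ℝ (Fin d) → Ω → Ω) (X : Set Ω) : Prop :=
  Perfect X ∧ X.Nonempty ∧ IsTotallyDisconnected X ∧
  (∀ x : Ω, ∃ p, φ p x ∈ X) ∧
  (∃ M : ℝ, 0 < M ∧
    IsOpen {ω : Ω | ∃ x ∈ X, ∃ p ∈ ball (0 : EuclideanSpace ℝ (Fin d)) M, φ p x = ω} ∧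
    ∃ e : (X × ball (0 : EuclideanSpace ℝ (Fin d)) M) ≃ₜ
        {ω : Ω | ∃ x ∈ X, ∃ p ∈ ball (0 : EuclideanSpace ℝ (Fin d)) M, φ p x = ω},
      ∀ xp : X × ball (0 : EuclideanSpace ℝ (Fin d)) M,
        (e xp : Ω) = φ (xp.2 : EuclideanSpace ℝ (Fin d)) (xp.1 : Ω)) ∧
  (∀ x ∈ X, ∀ r : ℝ, 0 < r → ∃ U ⊆ X, x ∈ U ∧ (∃ O, IsOpen O ∧ U = O ∩ X) ∧
    ∀ y ∈ U, {p ∈ ball (0 : EuclideanSpace ℝ (Fin d)) r | φ p x ∈ X}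
      = {p ∈ ball (0 : EuclideanSpace ℝ (Fin d)) r | φ p y ∈ X})

/-- `P_U(x) = {p ∈ ℝ^d : φ^p(x) ∈ U}`. -/
def Porbit (φ : EuclideanSpace ℝ (Fin d) → Ω → Ω) (U : Set Ω) (x : Ω) :
    Set (EuclideanSpace ℝ (Fin d)) :=
  {p | φ p x ∈ U}

/-!
Flatness makes the return times of a point of `X` to `X` a uniformly discrete subset of `ℝ^d`,
so only finitely many of them lie in `B(0,M)`. By freeness each non-zero one moves the point, so a
small neighbourhood of the point is disjoint from its translates by these finitely many vectors,
and local constancy of the return pattern shows that no other `p ∈ B(0,M)` returns it to `X` at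
all. In the Cantor set `X` such neighbourhoods can be taken clopen; a finite subcover, made
disjoint, is the required partition.
-/

open Metric Filter Topology Set Function

theorem exists_fin_clopen_partition {α : Type*} [TopologicalSpace α] [CompactSpace α]
    {P : Set α → Prop} (hP : ∀ ⦃s t⦄, s ⊆ t → P t → P s)
    (hloc : ∀ x, ∃ U, IsClopen U ∧ x ∈ U ∧ P U) :
    ∃ (n : ℕ) (D : Fin n → Set α), (∀ i, IsClopen (D i)) ∧ Pairwise (Disjoint on D) ∧
      ⋃ i, D i = univ ∧ ∀ i, P (D i) := by
  choose U hU hxU hPU using hloc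
  obtain ⟨t, ht⟩ := isCompact_univ.elim_finite_subcover U (fun x => (hU x).isOpen)
    fun x _ => mem_iUnion.2 ⟨x, hxU x⟩
  obtain ⟨n, f, -, hf⟩ := t.finite_toSet.fin_param
  refine ⟨n, disjointed (U ∘ f), fun i => disjointedRec (fun _ j hs => hs.diff (hU (f j)))
    (hU (f i)), disjoint_disjointed _, ?_, fun i => hP (disjointed_le _ i) (hPU (f i))⟩
  rw [iUnion_disjointed, eq_univ_iff_forall]
  intro x
  obtain ⟨y, hy, hxy⟩ := mem_iUnion₂.1 (ht (mem_univ x))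
  obtain ⟨i, rfl⟩ : y ∈ range f := hf ▸ hy
  exact mem_iUnion.2 ⟨i, hxy⟩

theorem isDiscrete_of_dist_lt_imp_eq {E : Type*} [PseudoMetricSpace E] {s : Set E} {ε : ℝ}
    (hε : 0 < ε) (hs : ∀ p ∈ s, ∀ q ∈ s, dist p q < ε → p = q) : IsDiscrete s :=
  isDiscrete_iff_forall_mem_exists_isOpen.2 fun p hp =>
    ⟨ball p ε, isOpen_ball, eq_singleton_iff_unique_mem.2
      ⟨⟨mem_ball_self hε, hp⟩, fun q hq => hs q hq.2 p hp hq.1⟩⟩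

theorem clopenIn_image_val {X : Set Ω} {D : Set X}
    (hD : IsClopen D) : ClopenIn (Subtype.val '' D) X :=
  ⟨Subtype.coe_image_subset X D, by rwa [preimage_image_eq _ Subtype.val_injective]⟩

theorem eventually_smallSets_disjoint_image {α : Type*} [TopologicalSpace α] [T2Space α]
    {f : α → α} {x : α} (hf : Continuous f) (hx : f x ≠ x) :
    ∀ᶠ U in (𝓝 x).smallSets, Disjoint U (f '' U) := by
  obtain ⟨A, B, hA, hB, hxA, hxB, hAB⟩ := t2_separation hx
  have hmem : B ∩ f ⁻¹' A ∈ 𝓝 x := inter_mem (hB.mem_nhds hxB) (hf.continuousAt.preimage_mem_nhds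
    (hA.mem_nhds hxA))
  filter_upwards [eventually_smallSets_subset.2 hmem] with U hU
  exact disjoint_left.2 fun _ hy ⟨z, hz, hzy⟩ => disjoint_left.1 hAB (hzy ▸ (hU hz).2) (hU hy).1

namespace FlatCantorTransversal

variable {φ : EuclideanSpace ℝ (Fin d) → Ω → Ω} {X : Set Ω}

theorem compactSpace [CompactSpace Ω] (hX : FlatCantorTransversal φ X) : CompactSpace X :=
  isCompact_iff_compactSpace.1 hX.1.1.isCompact

theorem exists_eq_zero_of_norm_lt (hact : IsCtsAction φ) (hX : FlatCantorTransversal φ X) :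
    ∃ M₀ > 0, ∀ x ∈ X, ∀ p ∈ Porbit φ X x, ‖p‖ < M₀ → p = 0 := by
  obtain ⟨-, -, -, -, ⟨M₀, hM₀, -, e, he⟩, -⟩ := hX
  refine ⟨M₀, hM₀, fun x hx p hpx hp => ?_⟩
  have hp' : p ∈ ball (0 : EuclideanSpace ℝ (Fin d)) M₀ := mem_ball_zero_iff.2 hp
  -- `φ^p(x) = φ^0(φ^p(x))`, so injectivity of the flow box forces `p = 0`.
  have h := e.injective (Subtype.ext ((he (⟨x, hx⟩, ⟨p, hp'⟩)).trans
    ((hact.2.1 _).symm.trans (he (⟨φ p x, hpx⟩, ⟨0, mem_ball_self hM₀⟩)).symm)))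
  exact congrArg (fun xp => (xp.2 : EuclideanSpace ℝ (Fin d))) h

theorem exists_porbit_separated (hact : IsCtsAction φ) (hX : FlatCantorTransversal φ X) :
    ∃ M₀ > 0, ∀ x ∈ X, ∀ p ∈ Porbit φ X x, ∀ q ∈ Porbit φ X x, dist p q < M₀ → p = q := by
  obtain ⟨M₀, hM₀, h⟩ := exists_eq_zero_of_norm_lt hact hX
  refine ⟨M₀, hM₀, fun x _ p hp q hq hpq => sub_eq_zero.1 (h _ hq (p - q) ?_ ?_)⟩
  · rwa [Porbit, mem_ofPred_eq, ← hact.2.2, sub_add_cancel]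
  · rwa [← dist_eq_norm]

theorem isClosed_porbit (hact : IsCtsAction φ) (hX : FlatCantorTransversal φ X) (x : Ω) :
    IsClosed (Porbit φ X x) :=
  hX.1.1.preimage (hact.1.comp (continuous_id.prodMk continuous_const))

theorem finite_ball_inter_porbit (hact : IsCtsAction φ) (hX : FlatCantorTransversal φ X)
    {x : Ω} (hx : x ∈ X) (r : ℝ) : (ball 0 r ∩ Porbit φ X x).Finite := by
  obtain ⟨M₀, hM₀, hsep⟩ := exists_porbit_separated hact hX
  exact finite_isBounded_inter_isClosed (isDiscrete_of_dist_lt_imp_eq hM₀ (hsep x hx))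
    isBounded_ball (isClosed_porbit hact hX x)

theorem eventually_smallSets_disjoint_image_inter [T2Space Ω] (hact : IsCtsAction φ)
    (hfree : IsFreeAction φ) (hX : FlatCantorTransversal φ X) {x : Ω} (hx : x ∈ X) {r : ℝ}
    (hr : 0 < r) : ∀ᶠ U in (𝓝 x).smallSets, ∀ p ∈ ball (0 : EuclideanSpace ℝ (Fin d)) r,
      p ≠ 0 → Disjoint (U ∩ X) (φ p '' (U ∩ X)) := by
  obtain ⟨_, -, hxO, ⟨O, hO, rfl⟩, hpat⟩ := hX.2.2.2.2.2 x hx r hr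
  have hF := finite_ball_inter_porbit hact hX hx r
  have hnear : ∀ᶠ U in (𝓝 x).smallSets, U ⊆ O :=
    eventually_smallSets_subset.2 (hO.mem_nhds hxO.1)
  have hmove : ∀ᶠ U in (𝓝 x).smallSets, ∀ p ∈ (ball 0 r ∩ Porbit φ X x) \ {0},
      Disjoint U (φ p '' U) :=
    hF.sdiff.eventually_all.2 fun p hp => eventually_smallSets_disjoint_image
      (hact.1.comp (Continuous.prodMk_right p)) fun h => hp.2 (hfree p x h)
  filter_upwards [hnear, hmove] with U hUO hU p hp hp0
  refine disjoint_left.2 ?_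
  rintro _ ⟨hpyU, hpyX⟩ ⟨y, ⟨hyU, hyX⟩, rfl⟩
  -- `y` has the same returns to `X` in `B(0,r)` as `x`, so `p` is one of the finitely many.
  have hpx : p ∈ ball 0 r ∩ Porbit φ X x := by
    change p ∈ {q ∈ ball 0 r | φ q x ∈ X}
    rw [hpat y ⟨hUO hyU, hyX⟩]
    exact ⟨hp, hpyX⟩
  exact disjoint_left.1 (hU p ⟨hpx, hp0⟩) hpyU (mem_image_of_mem _ hyU)

theorem exists_isClopen_disjoint_image [CompactSpace Ω] [T2Space Ω] (hact : IsCtsAction φ)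
    (hfree : IsFreeAction φ) (hX : FlatCantorTransversal φ X) {r : ℝ} (hr : 0 < r) (x : X) :
    ∃ C : Set X, IsClopen C ∧ x ∈ C ∧ ∀ p ∈ ball (0 : EuclideanSpace ℝ (Fin d)) r, p ≠ 0 →
      Disjoint (Subtype.val '' C) (φ p '' (Subtype.val '' C)) := by
  have := hX.compactSpace
  have : TotallyDisconnectedSpace X := totallyDisconnectedSpace_subtype_iff.2 hX.2.2.1
  obtain ⟨t, ht, hsmall⟩ := eventually_smallSets.1
    (eventually_smallSets_disjoint_image_inter hact hfree hX x.2 hr)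
  obtain ⟨C, ⟨hxC, hC⟩, hCt : C ⊆ _⟩ := (nhds_basis_clopen x).mem_iff.1
    (continuous_subtype_val.continuousAt.preimage_mem_nhds ht)
  refine ⟨C, hC, hxC, fun p hp hp0 => ?_⟩
  have h := hsmall _ (image_subset_iff.2 hCt) p hp hp0
  rwa [inter_eq_left.2 (Subtype.coe_image_subset X C)] at h

end FlatCantorTransversal

theorem stmt8_general [CompactSpace Ω] [TopologicalSpace.MetrizableSpace Ω]
    (φ : EuclideanSpace ℝ (Fin d) → Ω → Ω) (X : Set Ω)
    (hact : IsCtsAction φ) (hfree : IsFreeAction φ)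
    (hX : FlatCantorTransversal φ X) (M : ℝ) (hM : 0 < M) :
    ∃ (n : ℕ) (V : Fin n → Set Ω),
      (∀ i, ClopenIn (V i) X) ∧
      (∀ i j, i ≠ j → Disjoint (V i) (V j)) ∧
      (⋃ i, V i) = X ∧
      ∀ i, ∀ p ∈ ball (0 : EuclideanSpace ℝ (Fin d)) M, p ≠ 0 →
        Disjoint (V i) (φ p '' V i) := by
  have := hX.compactSpace
  obtain ⟨n, D, hD, hdisj, hcov, hret⟩ := exists_fin_clopen_partition
    (P := fun C : Set X => ∀ p ∈ ball (0 : EuclideanSpace ℝ (Fin d)) M, p ≠ 0 →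
      Disjoint (Subtype.val '' C) (φ p '' (Subtype.val '' C)))
    (fun s t hst ht p hp hp0 => (ht p hp hp0).mono (image_mono hst)
      (image_mono (image_mono hst)))
    (hX.exists_isClopen_disjoint_image hact hfree hM)
  refine ⟨n, fun i => Subtype.val '' D i, fun i => clopenIn_image_val (hD i),
    fun i j hij => disjoint_image_of_injective Subtype.val_injective (hdisj hij), ?_, hret⟩
  rw [← image_iUnion, hcov, image_univ, Subtype.range_coe]

/-- For a flat Cantor transversal `X` of a free minimal continuous action of `ℝ^d`
on a compact metrizable space and any `M > 0`, there is a finite clopen partition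
`V₁,…,V_n` of `X` with `V_i ∩ φ^p(V_i) = ∅` for every `i` and every non-zero
`p ∈ B(0,M)`. -/
theorem stmt8 [CompactSpace Ω] [TopologicalSpace.MetrizableSpace Ω] (hd : 1 ≤ d)
    (φ : EuclideanSpace ℝ (Fin d) → Ω → Ω) (X : Set Ω)
    (hact : IsCtsAction φ) (hfree : IsFreeAction φ) (hmin : IsMinimalAction φ)
    (hX : FlatCantorTransversal φ X) (M : ℝ) (hM : 0 < M) :
    ∃ (n : ℕ) (V : Fin n → Set Ω),
      (∀ i, ClopenIn (V i) X) ∧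
      (∀ i j, i ≠ j → Disjoint (V i) (V j)) ∧
      (⋃ i, V i) = X ∧
      ∀ i, ∀ p ∈ ball (0 : EuclideanSpace ℝ (Fin d)) M, p ≠ 0 →
        Disjoint (V i) (φ p '' V i) :=
  stmt8_general φ X hact hfree hX M hM
end
end

section
/- Let X ⊆ Ω be a flat Cantor transversal for a free minimal continuous action φ of ℝ^d on a compact metrizable space Ω, and suppose that there is M₁ > 0 such that P_X(x) is M₁-syndetic for every x ∈ X. Then for every M > M₁ there exists a clopen subset U ⊆ X such that P_U(x) is M-separated and 2M-syndetic for every x ∈ X. -/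
noncomputable section

open Metric

variable {d : ℕ} {Ω : Type*} [TopologicalSpace Ω]

/-!
Each point of `X` has a clopen neighbourhood `V` in `X` on which the finitely many return
times to `X` of length `< M` are the same at every point, and which no return of length in
`(0, M)` maps back into itself (the action is free and `Ω` is Hausdorff). Cover `X` by finitely
many such patches `V₁, …, Vₙ` and select greedily: `G₀ = ∅` and `Gᵢ₊₁` adds to `Gᵢ` the points of
`Vᵢ` that do not see `Gᵢ` within distance `M`. Constancy of the return pattern on `Vᵢ` keeps
every `Gᵢ` clopen. The final `G` is `M`-separated along orbits and every point of `X` sees it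
within distance `M`, so `P_G(x)` is `(M₁ + M)`-syndetic whenever `P_X(x)` is `M₁`-syndetic.
-/

set_option linter.unusedSectionVars false

open Filter Topology

lemma finite_of_isBounded_of_le_dist {E : Type*} [MetricSpace E] [ProperSpace E] {S : Set E}
    {ε : ℝ} (hε : 0 < ε) (hS : Bornology.IsBounded S)
    (hsep : ∀ p ∈ S, ∀ q ∈ S, p ≠ q → ε ≤ dist p q) : S.Finite := by
  obtain ⟨t, -, ht, hcover⟩ := finite_approx_of_totallyBounded
    (hS.isCompact_closure.totallyBounded.subset subset_closure) (ε / 2) (half_pos hε)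
  have hS_eq : S = ⋃ c ∈ t, S ∩ ball c (ε / 2) := by
    rw [← Set.inter_iUnion₂, Set.inter_eq_left.2 hcover]
  rw [hS_eq]
  refine ht.biUnion fun c _ => Set.Subsingleton.finite fun p hp q hq => ?_
  by_contra hpq
  have := dist_triangle_right p q c
  linarith [hsep p hp.1 q hq.1 hpq, mem_ball.1 hp.2, mem_ball.1 hq.2]

namespace ClopenIn

variable {X U V : Set Ω}

lemma empty : ClopenIn (∅ : Set Ω) X :=
  ⟨Set.empty_subset X, isClopen_empty⟩

lemma union (hU : ClopenIn U X) (hV : ClopenIn V X) : ClopenIn (U ∪ V) X :=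
  ⟨Set.union_subset hU.1 hV.1, hU.2.union hV.2⟩

lemma diff (hU : ClopenIn U X) (hV : ClopenIn V X) : ClopenIn (U \ V) X :=
  ⟨Set.sdiff_subset.trans hU.1, hU.2.diff hV.2⟩

lemma biUnion {ι : Type*} {s : Set ι} (hs : s.Finite) {U : ι → Set Ω}
    (hU : ∀ i ∈ s, ClopenIn (U i) X) : ClopenIn (⋃ i ∈ s, U i) X :=
  ⟨Set.iUnion₂_subset fun i hi => (hU i hi).1, by
    rw [Set.preimage_iUnion₂]; exact hs.isClopen_biUnion fun i hi => (hU i hi).2⟩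

lemma isClosed (hX : IsClosed X) (hU : ClopenIn U X) : IsClosed U := by
  simpa [Subtype.image_preimage_coe, Set.inter_eq_right.2 hU.1] using
    hX.isClosedMap_subtype_val _ hU.2.1

lemma exists_isOpen (hU : ClopenIn U X) : ∃ O, IsOpen O ∧ U = O ∩ X := by
  obtain ⟨O, hO, hOU⟩ := isOpen_induced_iff.1 hU.2.2
  refine ⟨O, hO, ?_⟩
  rw [← Set.inter_eq_left.2 hU.1, Set.inter_comm, ← Subtype.image_preimage_coe, ← hOU,
    Subtype.image_preimage_coe, Set.inter_comm]

lemma mem_nhdsWithin (hU : ClopenIn U X) {x : Ω} (hx : x ∈ U) : U ∈ 𝓝[X] x := by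
  obtain ⟨O, hO, rfl⟩ := hU.exists_isOpen
  exact inter_mem (mem_nhdsWithin_of_mem_nhds (hO.mem_nhds hx.1)) self_mem_nhdsWithin

lemma inter_preimage (hX : IsClosed X) (hU : ClopenIn U X) (hV : ClopenIn V X) {f : Ω → Ω}
    (hf : Continuous f) (hfU : Set.MapsTo f U X) : ClopenIn (U ∩ f ⁻¹' V) X := by
  have hf' : Continuous (f ∘ Subtype.val : X → Ω) := hf.comp continuous_subtype_val
  refine ⟨Set.inter_subset_left.trans hU.1, hU.2.1.inter ((hV.isClosed hX).preimage hf'), ?_⟩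
  obtain ⟨O, hO, rfl⟩ := hV.exists_isOpen
  have hpre : (Subtype.val ⁻¹' (U ∩ f ⁻¹' (O ∩ X)) : Set X) =
      Subtype.val ⁻¹' U ∩ (f ∘ Subtype.val) ⁻¹' O := by
    ext y
    exact ⟨fun h => ⟨h.1, h.2.1⟩, fun h => ⟨h.1, h.2, hfU h.1⟩⟩
  rw [hpre]
  exact hU.2.2.inter (hO.preimage hf')

end ClopenIn

lemma exists_clopenIn_subset_of_mem_nhdsWithin [T2Space Ω] {X N : Set Ω} (hXc : IsCompact X)
    (hXd : IsTotallyDisconnected X) {x : Ω} (hx : x ∈ X) (hN : N ∈ 𝓝[X] x) :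
    ∃ V, ClopenIn V X ∧ x ∈ V ∧ V ⊆ N := by
  have := isCompact_iff_compactSpace.1 hXc
  have := totallyDisconnectedSpace_subtype_iff.2 hXd
  obtain ⟨V, ⟨hxV, hV⟩, hVN⟩ := (nhds_basis_clopen (⟨x, hx⟩ : X)).mem_iff.1
    (preimage_coe_mem_nhds_subtype.2 hN)
  refine ⟨Subtype.val '' V, ⟨?_, ?_⟩, ⟨_, hxV, rfl⟩, Set.image_subset_iff.2 hVN⟩
  · exact Set.image_subset_iff.2 fun y _ => y.2
  · rwa [Subtype.val_injective.preimage_image]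

namespace IsCtsAction

variable {φ : EuclideanSpace ℝ (Fin d) → Ω → Ω}

lemma continuous_apply (hact : IsCtsAction φ) (p : EuclideanSpace ℝ (Fin d)) :
    Continuous (φ p) :=
  hact.1.comp (continuous_const.prodMk continuous_id)

lemma neg_apply_apply (hact : IsCtsAction φ) (p : EuclideanSpace ℝ (Fin d)) (y : Ω) :
    φ (-p) (φ p y) = y := by
  rw [← hact.2.2, neg_add_cancel, hact.2.1]

lemma sub_apply_apply (hact : IsCtsAction φ) (p q : EuclideanSpace ℝ (Fin d)) (y : Ω) :
    φ (p - q) (φ q y) = φ p y := by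
  rw [← hact.2.2, sub_add_cancel]

end IsCtsAction

lemma IsFreeAction.eventually_apply_ne [T2Space Ω] {φ : EuclideanSpace ℝ (Fin d) → Ω → Ω}
    (hfree : IsFreeAction φ) (hact : IsCtsAction φ) {F : Set (EuclideanSpace ℝ (Fin d))} (hF : F.Finite) (hF0 : 0 ∉ F)
    (x : Ω) : ∀ᶠ yz in 𝓝 x ×ˢ 𝓝 x, ∀ p ∈ F, φ p yz.1 ≠ yz.2 := by
  rw [← nhds_prod_eq, hF.eventually_all]
  exact fun p hp => (isOpen_ne_fun ((hact.continuous_apply p).comp continuous_fst)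
    continuous_snd).mem_nhds fun h => hF0 (hfree p x h ▸ hp)

section OrbitSeparation

variable {φ : EuclideanSpace ℝ (Fin d) → Ω → Ω} {X G V : Set Ω} {M : ℝ}

def orbitThickening (φ : EuclideanSpace ℝ (Fin d) → Ω → Ω) (M : ℝ) (G : Set Ω) : Set Ω :=
  {y | ∃ p ∈ ball (0 : EuclideanSpace ℝ (Fin d)) M, φ p y ∈ G}

def IsOrbitSeparated (φ : EuclideanSpace ℝ (Fin d) → Ω → Ω) (M : ℝ) (G : Set Ω) : Prop :=
  ∀ y ∈ G, ∀ p ∈ ball (0 : EuclideanSpace ℝ (Fin d)) M, φ p y ∈ G → p = 0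

def IsPatch (φ : EuclideanSpace ℝ (Fin d) → Ω → Ω) (X : Set Ω) (M : ℝ) (V : Set Ω) : Prop :=
  ClopenIn V X ∧ IsOrbitSeparated φ M V ∧
    ∃ F : Set (EuclideanSpace ℝ (Fin d)), F.Finite ∧
      ∀ y ∈ V, {p ∈ ball (0 : EuclideanSpace ℝ (Fin d)) M | φ p y ∈ X} = F

lemma orbitThickening_mono {G G' : Set Ω} (h : G ⊆ G') :
    orbitThickening φ M G ⊆ orbitThickening φ M G' :=
  fun _ ⟨p, hp, hpG⟩ => ⟨p, hp, h hpG⟩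

lemma subset_orbitThickening_union_diff (hact : IsCtsAction φ) (hM : 0 < M) :
    V ⊆ orbitThickening φ M (G ∪ (V \ orbitThickening φ M G)) := by
  intro y hy
  by_cases hyG : y ∈ orbitThickening φ M G
  · exact orbitThickening_mono Set.subset_union_left hyG
  · exact ⟨0, mem_ball_self hM, by rw [hact.2.1]; exact Or.inr ⟨hy, hyG⟩⟩

lemma IsOrbitSeparated.union_diff_orbitThickening (hact : IsCtsAction φ)
    (hG : IsOrbitSeparated φ M G) (hV : IsOrbitSeparated φ M V) :
    IsOrbitSeparated φ M (G ∪ (V \ orbitThickening φ M G)) := by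
  rintro y (hyG | ⟨hyV, hyG⟩) p hp (hpG | ⟨hpV, hpG⟩)
  · exact hG y hyG p hp hpG
  · -- `φ p y` would see `y ∈ G` through `-p`
    refine absurd ⟨-p, ?_, ?_⟩ hpG
    · rwa [mem_ball_zero_iff, norm_neg, ← mem_ball_zero_iff]
    · rwa [hact.neg_apply_apply]
  · exact absurd ⟨p, hp, hpG⟩ hyG
  · exact hV y hyV p hp hpV

lemma IsPatch.clopenIn_inter_orbitThickening (hact : IsCtsAction φ) (hX : IsClosed X)
    (hV : IsPatch φ X M V) (hG : ClopenIn G X) : ClopenIn (V ∩ orbitThickening φ M G) X := by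
  obtain ⟨hVc, -, F, hF, hpattern⟩ := hV
  have hunion : V ∩ orbitThickening φ M G = ⋃ p ∈ F, V ∩ φ p ⁻¹' G := by
    ext y
    simp only [Set.mem_inter_iff, Set.mem_iUnion, Set.mem_preimage, orbitThickening,
      exists_prop]
    constructor
    · rintro ⟨hy, p, hp, hpG⟩
      exact ⟨p, hpattern y hy ▸ ⟨hp, hG.1 hpG⟩, hy, hpG⟩
    · rintro ⟨p, hpF, hy, hpG⟩
      exact ⟨hy, p, (hpattern y hy ▸ hpF : p ∈ {p ∈ ball 0 M | φ p y ∈ X}).1, hpG⟩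
  rw [hunion]
  refine ClopenIn.biUnion hF fun p hpF => hVc.inter_preimage hX hG (hact.continuous_apply p) ?_
  intro y hy
  exact (hpattern y hy ▸ hpF : p ∈ {p ∈ ball 0 M | φ p y ∈ X}).2

lemma exists_clopenIn_isOrbitSeparated_of_patches (hact : IsCtsAction φ) (hX : IsClosed X)
    (hM : 0 < M) {ι : Type*} (t : Finset ι) (V : ι → Set Ω)
    (hV : ∀ i ∈ t, IsPatch φ X M (V i)) :
    ∃ G, ClopenIn G X ∧ IsOrbitSeparated φ M G ∧ ⋃ i ∈ t, V i ⊆ orbitThickening φ M G := by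
  classical
  induction t using Finset.induction_on with
  | empty => exact ⟨∅, ClopenIn.empty, fun _ h => h.elim, by simp⟩
  | insert i t _ ih =>
    obtain ⟨G, hGc, hGs, hGt⟩ := ih fun j hj => hV j (Finset.mem_insert_of_mem hj)
    have hVi := hV i (Finset.mem_insert_self i t)
    refine ⟨G ∪ (V i \ orbitThickening φ M G), hGc.union ?_,
      hGs.union_diff_orbitThickening hact hVi.2.1, ?_⟩
    · rw [← Set.sdiff_self_inter]
      exact hVi.1.diff (hVi.clopenIn_inter_orbitThickening hact hX hGc)
    · rw [Finset.set_biUnion_insert]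
      exact Set.union_subset (subset_orbitThickening_union_diff hact hM)
        (hGt.trans (orbitThickening_mono Set.subset_union_left))

lemma exists_clopenIn_isOrbitSeparated_of_forall_mem_patch [T2Space Ω] (hact : IsCtsAction φ)
    (hXc : IsCompact X) (hM : 0 < M) (h : ∀ x ∈ X, ∃ V, IsPatch φ X M V ∧ x ∈ V) :
    ∃ G, ClopenIn G X ∧ IsOrbitSeparated φ M G ∧ X ⊆ orbitThickening φ M G := by
  choose! V hV hxV using h
  obtain ⟨t, htX, hcover⟩ := hXc.elim_nhdsWithin_subcover V
    fun x hx => (hV x hx).1.mem_nhdsWithin (hxV x hx)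
  obtain ⟨G, hGc, hGs, hGt⟩ := exists_clopenIn_isOrbitSeparated_of_patches hact hXc.isClosed hM
    t V fun x hx => hV x (htX x hx)
  exact ⟨G, hGc, hGs, hcover.trans hGt⟩

lemma IsOrbitSeparated.isSeparatedSet_porbit (hact : IsCtsAction φ)
    (hG : IsOrbitSeparated φ M G) (x : Ω) : IsSeparatedSet M (Porbit φ G x) := by
  intro p hp q hq hpq
  by_contra! hlt
  refine hpq (sub_eq_zero.1 (hG _ hq (p - q) ?_ ?_))
  · rwa [mem_ball_zero_iff, ← dist_eq_norm]
  · rwa [hact.sub_apply_apply]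

lemma IsSyndeticSet.mono {M M' : ℝ} {P : Set (EuclideanSpace ℝ (Fin d))} (hP : IsSyndeticSet M P)
    (h : M ≤ M') : IsSyndeticSet M' P :=
  fun x => (hP x).imp fun _ hp => ⟨hp.1, hp.2.trans_le h⟩

lemma IsSyndeticSet.porbit_of_subset_orbitThickening (hact : IsCtsAction φ) {M₁ : ℝ} {x : Ω}
    (hsyn : IsSyndeticSet M₁ (Porbit φ X x)) (hX : X ⊆ orbitThickening φ M G) :
    IsSyndeticSet (M₁ + M) (Porbit φ G x) := by
  intro q
  obtain ⟨r, hr, hqr⟩ := hsyn q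
  obtain ⟨p, hp, hpG⟩ := hX hr
  refine ⟨p + r, show φ (p + r) x ∈ G by rwa [hact.2.2], ?_⟩
  calc dist q (p + r) ≤ dist q r + dist r (p + r) := dist_triangle q r (p + r)
    _ < M₁ + M := by
      rw [add_comm p r, dist_self_add_right]
      exact add_lt_add hqr (mem_ball_zero_iff.1 hp)

end OrbitSeparation

namespace FlatCantorTransversal

variable {φ : EuclideanSpace ℝ (Fin d) → Ω → Ω} {X : Set Ω} {M : ℝ}

lemma isCompact [CompactSpace Ω] (hX : FlatCantorTransversal φ X) : IsCompact X :=
  hX.1.closed.isCompact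

/-- Comes from injectivity of the flow box `X × B(0, M₀) → Ω`. -/
lemma exists_returnTime_gap (hX : FlatCantorTransversal φ X) (hact : IsCtsAction φ) :
    ∃ M₀ > 0, ∀ x ∈ X, ∀ p ∈ ball (0 : EuclideanSpace ℝ (Fin d)) M₀, φ p x ∈ X → p = 0 := by
  obtain ⟨M₀, hM₀, -, e, he⟩ := hX.2.2.2.2.1
  refine ⟨M₀, hM₀, fun x hx p hp hpx => ?_⟩
  have : e (⟨x, hx⟩, ⟨p, hp⟩) = e (⟨φ p x, hpx⟩, ⟨0, mem_ball_self hM₀⟩) :=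
    Subtype.ext (by rw [he, he, hact.2.1])
  exact congrArg (fun xp => (xp.2 : EuclideanSpace ℝ (Fin d))) (e.injective this)

lemma finite_returnTimes (hX : FlatCantorTransversal φ X) (hact : IsCtsAction φ) (x : Ω) :
    {p ∈ ball (0 : EuclideanSpace ℝ (Fin d)) M | φ p x ∈ X}.Finite := by
  obtain ⟨M₀, hM₀, hgap⟩ := hX.exists_returnTime_gap hact
  refine finite_of_isBounded_of_le_dist hM₀ (isBounded_ball.subset fun p hp => hp.1) ?_
  intro p hp q hq hpq
  by_contra! hlt
  refine hpq (sub_eq_zero.1 (hgap _ hq.2 (p - q) ?_ ?_))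
  · rwa [mem_ball_zero_iff, ← dist_eq_norm]
  · rw [hact.sub_apply_apply]; exact hp.2

lemma eventually_returnTimes_eq (hX : FlatCantorTransversal φ X) (hM : 0 < M) {x : Ω}
    (hx : x ∈ X) :
    ∀ᶠ y in 𝓝[X] x, {p ∈ ball (0 : EuclideanSpace ℝ (Fin d)) M | φ p y ∈ X} =
      {p ∈ ball (0 : EuclideanSpace ℝ (Fin d)) M | φ p x ∈ X} := by
  obtain ⟨U, -, hxU, ⟨O, hO, rfl⟩, hU⟩ := hX.2.2.2.2.2 x hx M hM
  filter_upwards [inter_mem (mem_nhdsWithin_of_mem_nhds (hO.mem_nhds hxU.1))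
    self_mem_nhdsWithin] with y hy using (hU y hy).symm

lemma exists_patch [CompactSpace Ω] [T2Space Ω] (hX : FlatCantorTransversal φ X)
    (hact : IsCtsAction φ) (hfree : IsFreeAction φ) (hM : 0 < M) {x : Ω} (hx : x ∈ X) :
    ∃ V, IsPatch φ X M V ∧ x ∈ V := by
  set F := {p ∈ ball (0 : EuclideanSpace ℝ (Fin d)) M | φ p x ∈ X}
  have hFfin : F.Finite := hX.finite_returnTimes hact x
  have hsep : ∀ᶠ yz in 𝓝[X] x ×ˢ 𝓝[X] x, ∀ p ∈ F \ {0}, φ p yz.1 ≠ yz.2 :=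
    (hfree.eventually_apply_ne hact (F := F \ {0}) hFfin.sdiff (fun h => h.2 rfl) x).filter_mono
      (prod_mono nhdsWithin_le_nhds nhdsWithin_le_nhds)
  obtain ⟨N, hN, hNsep⟩ := (eventually_prod_self_iff
    (r := fun y z => ∀ p ∈ F \ {0}, φ p y ≠ z)).1 hsep
  obtain ⟨V, hV, hxV, hVN⟩ := exists_clopenIn_subset_of_mem_nhdsWithin hX.isCompact hX.2.2.1 hx
    (inter_mem hN (hX.eventually_returnTimes_eq hM hx))
  have hpattern : ∀ y ∈ V, {p ∈ ball (0 : EuclideanSpace ℝ (Fin d)) M | φ p y ∈ X} = F :=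
    fun y hy => (hVN hy).2
  refine ⟨V, ⟨hV, fun y hy p hp hpy => ?_, F, hFfin, hpattern⟩, hxV⟩
  by_contra hp0
  have hpF : p ∈ F := hpattern y hy ▸ ⟨hp, hV.1 hpy⟩
  exact hNsep y (hVN hy).1 _ (hVN hpy).1 p ⟨hpF, hp0⟩ rfl

end FlatCantorTransversal

theorem stmt9_general [CompactSpace Ω] [TopologicalSpace.MetrizableSpace Ω]
    (φ : EuclideanSpace ℝ (Fin d) → Ω → Ω) (X : Set Ω)
    (hact : IsCtsAction φ) (hfree : IsFreeAction φ)
    (hX : FlatCantorTransversal φ X)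
    (M₁ : ℝ) (hM₁ : 0 < M₁) (hsyn : ∀ x ∈ X, IsSyndeticSet M₁ (Porbit φ X x))
    (M : ℝ) (hM : M₁ < M) :
    ∃ U : Set Ω, ClopenIn U X ∧
      ∀ x ∈ X, IsSeparatedSet M (Porbit φ U x) ∧ IsSyndeticSet (2 * M) (Porbit φ U x) := by
  have hMpos : 0 < M := hM₁.trans hM
  obtain ⟨U, hU, hUsep, hXU⟩ := exists_clopenIn_isOrbitSeparated_of_forall_mem_patch hact
    hX.isCompact hMpos fun x hx => hX.exists_patch hact hfree hMpos hx
  refine ⟨U, hU, fun x hx => ⟨hUsep.isSeparatedSet_porbit hact x, ?_⟩⟩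
  exact ((hsyn x hx).porbit_of_subset_orbitThickening hact hXU).mono (by linarith)

/-- Suppose `P_X(x)` is `M₁`-syndetic for every `x ∈ X`. Then for every `M > M₁`
there is a clopen subset `U ⊆ X` such that `P_U(x)` is `M`-separated and
`2M`-syndetic for every `x ∈ X`. -/
theorem stmt9 [CompactSpace Ω] [TopologicalSpace.MetrizableSpace Ω] (hd : 1 ≤ d)
    (φ : EuclideanSpace ℝ (Fin d) → Ω → Ω) (X : Set Ω)
    (hact : IsCtsAction φ) (hfree : IsFreeAction φ) (hmin : IsMinimalAction φ)
    (hX : FlatCantorTransversal φ X)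
    (M₁ : ℝ) (hM₁ : 0 < M₁) (hsyn : ∀ x ∈ X, IsSyndeticSet M₁ (Porbit φ X x))
    (M : ℝ) (hM : M₁ < M) :
    ∃ U : Set Ω, ClopenIn U X ∧
      ∀ x ∈ X, IsSeparatedSet M (Porbit φ U x) ∧ IsSyndeticSet (2 * M) (Porbit φ U x) :=
  stmt9_general φ X hact hfree hX M₁ hM₁ hsyn M hM
end
end

section
/- Under the standing assumptions on P and 𝒟, for every p ∈ P the open ball B(p, cM/(d+1)) is contained in T(p). In particular each cell T(p) contains an open ball of radius cM/(d+1). -/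
/-!
A cell through `p` and a cell avoiding `p` meet only in a face opposite `p`, which lies in the
hyperplane spanned by the other vertices of the first cell and hence at distance more than `cM`
from `p`. The ball `B(p, cM)` is connected and covered by the cells through `p` together with
finitely many cells avoiding `p` (the vertex set is uniformly discrete and cells are small), two
closed sets that would have to meet inside the ball; so the ball lies in `S(p)`. For `x` in a cell
`τ ∋ p`, the barycentric coordinate of `x` at a vertex `q ≠ p` is at most `d(x, p)` divided by the
height of `τ` at `q`, hence below `1/(d+1)` when `d(x, p) < cM/(d+1)`; the coordinate at `p` is
then the largest.
-/

noncomputable section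

open scoped Classical

open Metric

variable {d : ℕ}

/-- `T(p,τ)`: the points of `Conv(τ)` whose barycentric coordinate at `p`
is maximal. -/
def Tcell (τ : Finset (EuclideanSpace ℝ (Fin d))) (p : EuclideanSpace ℝ (Fin d)) :
    Set (EuclideanSpace ℝ (Fin d)) :=
  {x | ∃ lam : EuclideanSpace ℝ (Fin d) → ℝ,
    (∀ q ∈ τ, 0 ≤ lam q) ∧ (∑ q ∈ τ, lam q) = 1 ∧ (∀ q ∈ τ, lam q ≤ lam p) ∧
    x = ∑ q ∈ τ, lam q • q}

/-- `T(p) = ⋃_{τ ∈ 𝒟, p ∈ τ} T(p,τ)`. -/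
def Tset (𝒟 : Set (Finset (EuclideanSpace ℝ (Fin d)))) (p : EuclideanSpace ℝ (Fin d)) :
    Set (EuclideanSpace ℝ (Fin d)) :=
  ⋃ τ ∈ {τ ∈ 𝒟 | p ∈ τ}, Tcell τ p

/-- `S(p) = ⋃_{τ ∈ 𝒟, p ∈ τ} Conv(τ)`. -/
def Sset (𝒟 : Set (Finset (EuclideanSpace ℝ (Fin d)))) (p : EuclideanSpace ℝ (Fin d)) :
    Set (EuclideanSpace ℝ (Fin d)) :=
  ⋃ τ ∈ {τ ∈ 𝒟 | p ∈ τ}, convexHull ℝ (↑τ : Set (EuclideanSpace ℝ (Fin d)))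

/-- Standing assumptions: `P` is `M`-separated and `2M`-syndetic and `𝒟` is a
collection of `(d+1)`-element affinely independent subsets of `P` such that:
(i) the sets `Conv(τ)`, `τ ∈ 𝒟`, cover `ℝ^d` with pairwise disjoint interiors;
(ii) any two cells meet face to face; (iii) every `p ∈ P` lies in some `τ ∈ 𝒟`;
(iv) every `τ ∈ 𝒟` lies in a closed ball of radius `< √5·M`;
(v) `d(p, H(τ∖{p})) > c·M` for every `τ ∈ 𝒟` and `p ∈ τ`. -/
def Standing (M c : ℝ) (P : Set (EuclideanSpace ℝ (Fin d)))
    (𝒟 : Set (Finset (EuclideanSpace ℝ (Fin d)))) : Prop :=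
  IsSeparatedSet M P ∧ IsSyndeticSet (2 * M) P ∧
  (∀ τ ∈ 𝒟, τ.card = d + 1 ∧ (↑τ : Set (EuclideanSpace ℝ (Fin d))) ⊆ P ∧
    AffineIndependent ℝ (fun q : (τ : Set (EuclideanSpace ℝ (Fin d))) =>
      (q : EuclideanSpace ℝ (Fin d)))) ∧
  (⋃ τ ∈ 𝒟, convexHull ℝ (↑τ : Set (EuclideanSpace ℝ (Fin d)))) = Set.univ ∧
  (∀ τ ∈ 𝒟, ∀ τ' ∈ 𝒟, τ ≠ τ' →
    interior (convexHull ℝ (↑τ : Set (EuclideanSpace ℝ (Fin d)))) ∩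
      interior (convexHull ℝ (↑τ' : Set (EuclideanSpace ℝ (Fin d)))) = ∅) ∧
  (∀ τ ∈ 𝒟, ∀ τ' ∈ 𝒟,
    convexHull ℝ (↑τ : Set (EuclideanSpace ℝ (Fin d))) ∩
      convexHull ℝ (↑τ' : Set (EuclideanSpace ℝ (Fin d)))
    = convexHull ℝ (↑(τ ∩ τ') : Set (EuclideanSpace ℝ (Fin d)))) ∧
  (∀ p ∈ P, ∃ τ ∈ 𝒟, p ∈ τ) ∧
  (∀ τ ∈ 𝒟, ∃ z r, r < Real.sqrt 5 * M ∧
    (↑τ : Set (EuclideanSpace ℝ (Fin d))) ⊆ closedBall z r) ∧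
  (∀ τ ∈ 𝒟, ∀ p ∈ τ,
    c * M < Metric.infDist p
      (affineSpan ℝ (↑(τ.erase p) : Set (EuclideanSpace ℝ (Fin d)))
        : Set (EuclideanSpace ℝ (Fin d))))

theorem Set.Finite.finite_finset_subsets {α : Type*} {K : Set α} (hK : K.Finite) :
    {σ : Finset α | (σ : Set α) ⊆ K}.Finite :=
  hK.finite_subsets.preimage Finset.coe_injective.injOn

theorem finite_inter_closedBall_of_le_dist {X : Type*} [PseudoMetricSpace X] [ProperSpace X]
    {M : ℝ} (hM : 0 < M) {P : Set X} (hP : ∀ p ∈ P, ∀ q ∈ P, p ≠ q → M ≤ dist p q)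
    (y : X) (R : ℝ) : (P ∩ closedBall y R).Finite := by
  obtain ⟨t, ht, hcover⟩ := totallyBounded_iff.mp
    (isCompact_closedBall y R).totallyBounded (M / 2) (by positivity)
  have hnear : ∀ k ∈ P ∩ closedBall y R, ∃ z ∈ t, k ∈ ball z (M / 2) := by
    intro k hk
    simpa using hcover hk.2
  choose! φ hφt hφ using hnear
  -- two points of `P` sharing a centre would be closer than `M`
  have hφinj : Set.InjOn φ (P ∩ closedBall y R) := by
    intro k₁ hk₁ k₂ hk₂ hφk
    by_contra hne
    have h₁ := hφ k₁ hk₁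
    have h₂ := hφ k₂ hk₂
    rw [hφk, mem_ball] at h₁
    rw [mem_ball'] at h₂
    linarith [dist_triangle k₁ (φ k₂) k₂, hP k₁ hk₁.1 k₂ hk₂.1 hne]
  exact Set.Finite.of_finite_image (ht.subset (Set.image_subset_iff.mpr hφt)) hφinj

section Simplex

variable {E : Type*} [NormedAddCommGroup E] [NormedSpace ℝ E] [DecidableEq E]

omit [DecidableEq E] in
theorem subset_closedBall_two_mul_of_mem_convexHull {s : Set E} {z u : E} {r : ℝ}
    (hs : s ⊆ closedBall z r) (hu : u ∈ convexHull ℝ s) : s ⊆ closedBall u (2 * r) := by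
  intro q hq
  have hu' : dist u z ≤ r := convexHull_min hs (convex_closedBall z r) hu
  rw [mem_closedBall]
  linarith [dist_triangle_right q u z, mem_closedBall.mp (hs hq)]

theorem mem_affineSpan_erase_of_mem_convexHull_inter {τ σ : Finset E} {p y : E}
    (hface : convexHull ℝ (τ : Set E) ∩ convexHull ℝ (σ : Set E) =
      convexHull ℝ ((τ ∩ σ : Finset E) : Set E))
    (hpσ : p ∉ σ) (hyτ : y ∈ convexHull ℝ (τ : Set E)) (hyσ : y ∈ convexHull ℝ (σ : Set E)) :
    y ∈ affineSpan ℝ ((τ.erase p : Finset E) : Set E) := by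
  have hsub : ((τ ∩ σ : Finset E) : Set E) ⊆ (τ.erase p : Finset E) := by
    intro q hq
    simp only [Finset.coe_inter, Set.mem_inter_iff, Finset.mem_coe] at hq
    exact Finset.mem_erase.mpr ⟨fun hqp => hpσ (hqp ▸ hq.2), hq.1⟩
  exact convexHull_subset_affineSpan _ (convexHull_mono hsub (hface ▸ ⟨hyτ, hyσ⟩))

theorem mul_infDist_affineSpan_erase_le {τ : Finset E} {w : E → ℝ} {p q : E}
    (hp : p ∈ τ) (hq : q ∈ τ) (hpq : p ≠ q) (hwq : 0 ≤ w q) (hw : ∑ r ∈ τ, w r = 1) :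
    w q * infDist q (affineSpan ℝ ((τ.erase q : Finset E) : Set E)) ≤
      dist (∑ r ∈ τ, w r • r) p := by
  rcases hwq.eq_or_lt with hwq0 | hwq_pos
  · rw [← hwq0, zero_mul]
    exact dist_nonneg
  set H := affineSpan ℝ ((τ.erase q : Finset E) : Set E)
  set x := ∑ r ∈ τ, w r • r
  set v := ∑ r ∈ τ.erase q, w r • (r - p)
  have hpH : p ∈ H := subset_affineSpan ℝ _ (Finset.mem_erase.mpr ⟨hpq, hp⟩)
  have hvH : v ∈ H.direction := by
    rw [direction_affineSpan]
    refine Submodule.sum_mem _ fun r hr => Submodule.smul_mem _ _ ?_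
    exact vsub_mem_vectorSpan ℝ hr (Finset.mem_erase.mpr ⟨hpq, hp⟩)
  have hxp : x - p = w q • (q - p) + v := by
    calc x - p = ∑ r ∈ τ, w r • (r - p) := by
          simp only [x, smul_sub, Finset.sum_sub_distrib, ← Finset.sum_smul, hw, one_smul]
      _ = w q • (q - p) + v := (Finset.add_sum_erase τ _ hq).symm
  -- `q - (x - p) / w q` is a point of `H` at distance `dist x p / w q` from `q`
  have hmem : q - (w q)⁻¹ • (x - p) ∈ H := by
    have : q - (w q)⁻¹ • (x - p) = (-(w q)⁻¹ • v) +ᵥ p := by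
      rw [hxp, smul_add, smul_smul, inv_mul_cancel₀ hwq_pos.ne', one_smul, vadd_eq_add,
        neg_smul]
      abel
    rw [this]
    exact AffineSubspace.vadd_mem_of_mem_direction (Submodule.smul_mem _ _ hvH) hpH
  calc w q * infDist q H ≤ w q * dist q (q - (w q)⁻¹ • (x - p)) :=
        mul_le_mul_of_nonneg_left (infDist_le_dist_of_mem hmem) hwq
    _ = dist x p := by
        rw [dist_eq_norm, sub_sub_cancel, norm_smul, norm_inv, Real.norm_of_nonneg hwq,
          ← mul_assoc, mul_inv_cancel₀ hwq_pos.ne', one_mul, dist_eq_norm]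

end Simplex

theorem Finset.le_apply_of_forall_ne_le_inv_card {α : Type*} [DecidableEq α] {τ : Finset α}
    {w : α → ℝ} {p : α} (hp : p ∈ τ) (hw : ∑ r ∈ τ, w r = 1)
    (hle : ∀ q ∈ τ, q ≠ p → w q ≤ (τ.card : ℝ)⁻¹) : ∀ q ∈ τ, w q ≤ w p := by
  have hcard : (0 : ℝ) < τ.card := by exact_mod_cast Finset.card_pos.mpr ⟨p, hp⟩
  have hrest : ∑ r ∈ τ.erase p, w r ≤ ((τ.card : ℝ) - 1) * (τ.card : ℝ)⁻¹ := by
    calc ∑ r ∈ τ.erase p, w r ≤ ∑ _r ∈ τ.erase p, (τ.card : ℝ)⁻¹ :=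
          Finset.sum_le_sum fun r hr => hle r (Finset.mem_of_mem_erase hr)
            (Finset.ne_of_mem_erase hr)
      _ = ((τ.card : ℝ) - 1) * (τ.card : ℝ)⁻¹ := by
          rw [Finset.sum_const, Finset.card_erase_of_mem hp, nsmul_eq_mul,
            Nat.cast_sub (Finset.card_pos.mpr ⟨p, hp⟩), Nat.cast_one]
  have hwp : (τ.card : ℝ)⁻¹ ≤ w p := by
    have hsplit := Finset.sum_erase_add τ w hp
    rw [hw] at hsplit
    have : ((τ.card : ℝ) - 1) * (τ.card : ℝ)⁻¹ = 1 - (τ.card : ℝ)⁻¹ := by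
      field_simp
    linarith
  intro q hq
  by_cases hqp : q = p
  · rw [hqp]
  · exact (hle q hq hqp).trans hwp

namespace Standing

variable {M c : ℝ} {P : Set (EuclideanSpace ℝ (Fin d))}
  {𝒟 : Set (Finset (EuclideanSpace ℝ (Fin d)))}

theorem subset_closedBall_of_mem_convexHull (hS : Standing M c P 𝒟) {τ} (hτ : τ ∈ 𝒟)
    {u : EuclideanSpace ℝ (Fin d)} (hu : u ∈ convexHull ℝ (τ : Set (EuclideanSpace ℝ (Fin d)))) :
    (τ : Set (EuclideanSpace ℝ (Fin d))) ⊆ closedBall u (2 * (√5 * M)) := by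
  obtain ⟨-, -, -, -, -, -, -, hballs, -⟩ := hS
  obtain ⟨z, r, hr, hτz⟩ := hballs τ hτ
  exact (subset_closedBall_two_mul_of_mem_convexHull hτz hu).trans
    (closedBall_subset_closedBall (by linarith))

theorem finite_setOf_subset_closedBall (hS : Standing M c P 𝒟) (hM : 0 < M)
    (y : EuclideanSpace ℝ (Fin d)) (R : ℝ) :
    {τ ∈ 𝒟 | (τ : Set (EuclideanSpace ℝ (Fin d))) ⊆ closedBall y R}.Finite :=
  (finite_inter_closedBall_of_le_dist hM hS.1 y R).finite_finset_subsets.subset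
    fun τ ⟨hτ, hτy⟩ => Set.subset_inter (hS.2.2.1 τ hτ).2.1 hτy

theorem isClosed_Sset (hS : Standing M c P 𝒟) (hM : 0 < M) (p : EuclideanSpace ℝ (Fin d)) :
    IsClosed (Sset 𝒟 p) := by
  have hfin : {τ ∈ 𝒟 | p ∈ τ}.Finite :=
    (hS.finite_setOf_subset_closedBall hM p (2 * (√5 * M))).subset fun τ ⟨hτ, hpτ⟩ =>
      ⟨hτ, hS.subset_closedBall_of_mem_convexHull hτ (subset_convexHull ℝ _ hpτ)⟩
  exact hfin.isClosed_biUnion fun τ _ => (τ.finite_toSet.isCompact_convexHull (𝕜 := ℝ)).isClosed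

theorem ball_subset_Sset (hS : Standing M c P 𝒟) (hM : 0 < M) {p : EuclideanSpace ℝ (Fin d)}
    (hp : p ∈ P) : ball p (c * M) ⊆ Sset 𝒟 p := by
  obtain ⟨-, -, -, hcov, -, hface, hmem, -, hheight⟩ := id hS
  intro z hz
  by_contra hzS
  set R := c * M + 2 * (√5 * M)
  set Q := ⋃ σ ∈ {σ ∈ 𝒟 | (σ : Set (EuclideanSpace ℝ (Fin d))) ⊆ closedBall p R ∧ p ∉ σ},
    convexHull ℝ (σ : Set (EuclideanSpace ℝ (Fin d)))
  have hQ : IsClosed Q :=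
    ((hS.finite_setOf_subset_closedBall hM p R).subset fun σ hσ => ⟨hσ.1, hσ.2.1⟩)
      |>.isClosed_biUnion fun σ _ => (σ.finite_toSet.isCompact_convexHull (𝕜 := ℝ)).isClosed
  have hcover : ball p (c * M) ⊆ Sset 𝒟 p ∪ Q := by
    intro y hy
    obtain ⟨σ, hσ, hyσ⟩ := Set.mem_iUnion₂.mp (hcov ▸ Set.mem_univ y)
    by_cases hpσ : p ∈ σ
    · exact Or.inl (Set.mem_biUnion ⟨hσ, hpσ⟩ hyσ)
    · refine Or.inr (Set.mem_biUnion ⟨hσ, ?_, hpσ⟩ hyσ)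
      refine (hS.subset_closedBall_of_mem_convexHull hσ hyσ).trans
        (closedBall_subset_closedBall' ?_)
      linarith [mem_ball.mp hy]
  have hpS : p ∈ Sset 𝒟 p := by
    obtain ⟨τ, hτ, hpτ⟩ := hmem p hp
    exact Set.mem_biUnion ⟨hτ, hpτ⟩ (subset_convexHull ℝ _ hpτ)
  have hzQ : z ∈ Q := (hcover hz).resolve_left hzS
  obtain ⟨y, hy, hyS, hyQ⟩ := isPreconnected_closed_iff.mp (convex_ball p _).isPreconnected
    _ _ (hS.isClosed_Sset hM p) hQ hcover
    ⟨p, mem_ball_self (pos_of_mem_ball hz), hpS⟩ ⟨z, hz, hzQ⟩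
  obtain ⟨τ, ⟨hτ, hpτ⟩, hyτ⟩ := Set.mem_iUnion₂.mp hyS
  obtain ⟨σ, ⟨hσ, -, hpσ⟩, hyσ⟩ := Set.mem_iUnion₂.mp hyQ
  have hyH := mem_affineSpan_erase_of_mem_convexHull_inter (hface τ hτ σ hσ) hpσ hyτ hyσ
  linarith [hheight τ hτ p hpτ, infDist_le_dist_of_mem hyH (x := p), mem_ball'.mp hy]

theorem mem_Tcell (hS : Standing M c P 𝒟) {τ} (hτ : τ ∈ 𝒟) {p : EuclideanSpace ℝ (Fin d)}
    (hpτ : p ∈ τ) {x : EuclideanSpace ℝ (Fin d)}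
    (hxτ : x ∈ convexHull ℝ (τ : Set (EuclideanSpace ℝ (Fin d))))
    (hxp : dist x p < c * M / (d + 1)) : x ∈ Tcell τ p := by
  obtain ⟨-, -, hsimplex, -, -, -, -, -, hheight⟩ := hS
  obtain ⟨w, hw0, hw1, rfl⟩ := Finset.mem_convexHull'.mp hxτ
  have hcM : 0 < c * M :=
    (div_pos_iff_of_pos_right (by positivity)).mp (dist_nonneg.trans_lt hxp)
  refine ⟨w, hw0, hw1, Finset.le_apply_of_forall_ne_le_inv_card hpτ hw1 ?_, rfl⟩
  intro q hq hqp
  rw [(hsimplex τ hτ).1, Nat.cast_add_one]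
  have hwq : w q * (c * M) ≤ dist (∑ r ∈ τ, w r • r) p :=
    (mul_le_mul_of_nonneg_left (hheight τ hτ q hq).le (hw0 q hq)).trans
      (mul_infDist_affineSpan_erase_le hpτ hq (Ne.symm hqp) (hw0 q hq) hw1)
  have : w q * (c * M) < (d + 1 : ℝ)⁻¹ * (c * M) := by
    rw [inv_mul_eq_div]
    exact hwq.trans_lt hxp
  exact (lt_of_mul_lt_mul_right this hcM.le).le

end Standing

theorem stmt12_general (M c : ℝ) (hM : 0 < M)
    (P : Set (EuclideanSpace ℝ (Fin d))) (𝒟 : Set (Finset (EuclideanSpace ℝ (Fin d))))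
    (hS : Standing M c P 𝒟) (p : EuclideanSpace ℝ (Fin d)) (hp : p ∈ P) :
    ball p (c * M / (d + 1)) ⊆ Tset 𝒟 p := by
  intro x hx
  have hcM : 0 < c * M := (div_pos_iff_of_pos_right (by positivity)).mp (pos_of_mem_ball hx)
  obtain ⟨τ, ⟨hτ, hpτ⟩, hxτ⟩ := Set.mem_iUnion₂.mp <| hS.ball_subset_Sset hM hp <|
    ball_subset_ball (div_le_self hcM.le (by simp)) hx
  exact Set.mem_biUnion ⟨hτ, hpτ⟩ (hS.mem_Tcell hτ hpτ hxτ (mem_ball.mp hx))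

/-- Under the standing assumptions, for every `p ∈ P` the open ball
`B(p, cM/(d+1))` is contained in `T(p)`. -/
theorem stmt12 (hd : 1 ≤ d) (M c : ℝ) (hM : 0 < M) (hc : 0 < c)
    (P : Set (EuclideanSpace ℝ (Fin d))) (𝒟 : Set (Finset (EuclideanSpace ℝ (Fin d))))
    (hS : Standing M c P 𝒟) (p : EuclideanSpace ℝ (Fin d)) (hp : p ∈ P) :
    ball p (c * M / (d + 1)) ⊆ Tset 𝒟 p :=
  stmt12_general M c hM P 𝒟 hS p hp
end
end

section
/- Under the standing assumptions on P and 𝒟, for every p ∈ P and every 0 < λ < 1, each point of the set λ(S(p)−p)+p = {λ(q−p)+p : q ∈ S(p)} is at distance greater than (1−λ)·c·M from every point of the boundary ∂S(p). -/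
noncomputable section

open scoped Classical

open Metric

variable {d : ℕ}

/-!
The barycentric coordinate of `p` in the cells containing `p`, extended by `0` over the other
cells, is a well-defined function `φ` on `ℝ^d` because cells meet face to face. On a cell `τ`
it is affine with gradient of norm at most `1 / dist(p, H(τ ∖ {p}))`; since the cells form a
closed cover that is locally finite (`P` is separated and cells are bounded), `φ` is globally `D⁻¹`-Lipschitz, where `D > c·M` is the least of
these vertex-facet distances over the finitely many cells containing `p`. Now `φ ≥ 1 - λ` at
`λ(q - p) + p` and `φ > 0` only inside `S(p)`, so the open ball of radius `(1 - λ)·D` about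
`λ(q - p) + p` lies in the interior of `S(p)` and misses its boundary.
-/

open Filter Topology Set

theorem dist_le_mul_of_eventually_dist_le {F : Type*} [PseudoMetricSpace F] {g : ℝ → F} {L : ℝ}
    (h : ∀ t, ∀ᶠ s in 𝓝 t, dist (g s) (g t) ≤ L * dist s t) {a b : ℝ} (hab : a ≤ b) :
    dist (g b) (g a) ≤ L * (b - a) := by
  have hg : Continuous g := continuous_iff_continuousAt.2 fun t =>
    tendsto_iff_dist_tendsto_zero.2 <| squeeze_zero' (Eventually.of_forall fun _ => dist_nonneg)
      (h t) (by simpa using (show Continuous fun s => L * dist s t by fun_prop).tendsto t)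
  have hs : IsClosed ({t | dist (g t) (g a) ≤ L * (t - a)} ∩ Icc a b) :=
    (isClosed_le (hg.dist continuous_const) (by fun_prop)).inter isClosed_Icc
  refine hs.Icc_subset_of_forall_mem_nhdsWithin (by simp) (fun t ⟨ht, _⟩ => ?_) ⟨hab, le_rfl⟩
  filter_upwards [nhdsWithin_le_nhds (h t), self_mem_nhdsWithin] with u hu (htu : t < u)
  rw [Real.dist_eq, abs_of_pos (sub_pos.2 htu)] at hu
  calc dist (g u) (g a) ≤ dist (g u) (g t) + dist (g t) (g a) := dist_triangle ..
    _ ≤ L * (u - t) + L * (t - a) := add_le_add hu ht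
    _ = L * (u - a) := by ring

theorem LipschitzWith.of_eventually_dist_le {E F : Type*} [NormedAddCommGroup E]
    [NormedSpace ℝ E] [PseudoMetricSpace F] {f : E → F} {K : NNReal}
    (h : ∀ x, ∀ᶠ y in 𝓝 x, dist (f y) (f x) ≤ K * dist y x) : LipschitzWith K f := by
  refine LipschitzWith.of_dist_le_mul fun x y => ?_
  have hline : ∀ t, ∀ᶠ s in 𝓝 t, dist (f (AffineMap.lineMap y x s)) (f (AffineMap.lineMap y x t))
      ≤ K * dist x y * dist s t := fun t => by
    filter_upwards [((AffineMap.lineMap_continuous (R := ℝ) (p := y) (q := x)).tendsto t).eventually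
      (h _)] with s hs
    rwa [dist_lineMap_lineMap, dist_comm y x, mul_comm (dist s t), ← mul_assoc] at hs
  simpa using dist_le_mul_of_eventually_dist_le hline zero_le_one

theorem AffineBasis.mem_affineSpan_image_compl_of_coord_eq_zero {ι E : Type*} [Fintype ι]
    [AddCommGroup E] [Module ℝ E] (b : AffineBasis ι ℝ E) {i : ι} {x : E}
    (hx : b.coord i x = 0) : x ∈ affineSpan ℝ (b '' {i}ᶜ) := by
  rw [← b.affineCombination_coord_eq_self x]
  exact affineCombination_mem_affineSpan_image (b.sum_coord_apply_eq_one x)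
    (fun j _ hj => by rwa [mem_singleton_iff.1 (notMem_compl_iff.1 hj)]) b

theorem AffineBasis.infDist_mul_abs_coord_sub_le {ι E : Type*} [Fintype ι]
    [NormedAddCommGroup E] [NormedSpace ℝ E] (b : AffineBasis ι ℝ E) (i : ι) (x y : E) :
    infDist (b i) (affineSpan ℝ (b '' {i}ᶜ)) * |b.coord i x - b.coord i y| ≤ dist x y := by
  set a := (b.coord i).linear (x - y)
  have ha : b.coord i x - b.coord i y = a := ((b.coord i).linearMap_vsub x y).symm
  rw [ha]
  rcases eq_or_ne a 0 with h | h
  · simp [h]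
  -- the point of the line through `b i` in direction `x - y` where the coordinate vanishes
  set h₀ := b i - a⁻¹ • (x - y)
  have hh₀ : b.coord i h₀ = 0 := by
    have := (b.coord i).linearMap_vsub h₀ (b i)
    simp only [vsub_eq_sub, h₀, sub_sub_cancel_left, map_neg, map_smul, b.coord_apply_eq] at this
    rw [smul_eq_mul, inv_mul_cancel₀ h] at this
    linarith
  calc infDist (b i) (affineSpan ℝ (b '' {i}ᶜ)) * |a| ≤ dist (b i) h₀ * |a| := by
        gcongr
        exact infDist_le_dist_of_mem (b.mem_affineSpan_image_compl_of_coord_eq_zero hh₀)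
    _ = dist x y := by
        rw [dist_eq_norm, sub_sub_cancel, norm_smul, norm_inv, Real.norm_eq_abs, dist_eq_norm]
        field_simp

theorem IsSeparatedSet.finite_inter_of_isCompact {M : ℝ} {P K : Set (EuclideanSpace ℝ (Fin d))}
    (hM : 0 < M) (hP : IsSeparatedSet M P) (hK : IsCompact K) : (P ∩ K).Finite := by
  obtain ⟨t, -, ht, hKt⟩ := finite_cover_balls_of_compact hK (half_pos hM)
  refine (ht.biUnion (t := fun x => P ∩ ball x (M / 2)) fun x _ =>
    Set.Subsingleton.finite ?_).subset ?_
  · rintro q ⟨hqP, hq⟩ r ⟨hrP, hr⟩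
    by_contra hne
    rw [mem_ball] at hq hr
    linarith [hP q hqP r hrP hne, dist_triangle_right q r x]
  · rintro q ⟨hqP, hqK⟩
    obtain ⟨x, hx, hqx⟩ := mem_iUnion₂.1 (hKt hqK)
    exact mem_iUnion₂.2 ⟨x, hx, hqP, hqx⟩

theorem locallyFinite_convexHull_of_isSeparatedSet {M R : ℝ} {P : Set (EuclideanSpace ℝ (Fin d))}
    {𝒟 : Set (Finset (EuclideanSpace ℝ (Fin d)))} (hM : 0 < M) (hP : IsSeparatedSet M P)
    (hsub : ∀ τ ∈ 𝒟, (↑τ : Set (EuclideanSpace ℝ (Fin d))) ⊆ P)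
    (hbdd : ∀ τ ∈ 𝒟, ∃ z r, r < R ∧ (↑τ : Set (EuclideanSpace ℝ (Fin d))) ⊆ closedBall z r) :
    LocallyFinite fun τ : 𝒟 => convexHull ℝ (τ : Set (EuclideanSpace ℝ (Fin d))) := by
  intro x
  let F := (hP.finite_inter_of_isCompact hM (isCompact_closedBall x (2 * R + 1))).toFinset
  refine ⟨ball x 1, ball_mem_nhds x one_pos,
    (F.powerset.finite_toSet.preimage Subtype.val_injective.injOn).subset ?_⟩
  rintro ⟨τ, hτ⟩ ⟨w, hwτ, hwx⟩
  simp only [mem_preimage, Finset.coe_powerset, mem_powerset_iff, Finset.coe_subset]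
  intro q hq
  obtain ⟨z, r, hrR, hτz⟩ := hbdd τ hτ
  have hwz : dist w z ≤ r := convexHull_min hτz (convex_closedBall z r) hwτ
  have hqz : dist q z ≤ r := hτz hq
  rw [mem_ball] at hwx
  simp only [F, Set.Finite.mem_toFinset, mem_inter_iff, mem_closedBall]
  exact ⟨hsub τ hτ hq, by linarith [dist_triangle4 q z w x, dist_comm z w]⟩

def vertexFacetDist (τ : Finset (EuclideanSpace ℝ (Fin d))) (p : EuclideanSpace ℝ (Fin d)) : ℝ :=
  infDist p (affineSpan ℝ (↑(τ.erase p) : Set (EuclideanSpace ℝ (Fin d))))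

namespace Standing

variable {M c : ℝ} {P : Set (EuclideanSpace ℝ (Fin d))}
  {𝒟 : Set (Finset (EuclideanSpace ℝ (Fin d)))} {τ τ' : Finset (EuclideanSpace ℝ (Fin d))}
  {p q x : EuclideanSpace ℝ (Fin d)} {D : ℝ}

def cellBasis (hS : Standing M c P 𝒟) (hτ : τ ∈ 𝒟) : AffineBasis τ ℝ (EuclideanSpace ℝ (Fin d))
    where
  toFun := (↑)
  ind' := (hS.2.2.1 τ hτ).2.2
  tot' := (hS.2.2.1 τ hτ).2.2.affineSpan_eq_top_iff_card_eq_finrank_add_one.2 <| by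
    simp [(hS.2.2.1 τ hτ).1]

/-- The barycentric coordinate of `p` on the cell `τ`, taken to be `0` when `p` is not a vertex
of `τ`. -/
def cellCoord (hS : Standing M c P 𝒟) (hτ : τ ∈ 𝒟) (p : EuclideanSpace ℝ (Fin d)) :
    EuclideanSpace ℝ (Fin d) →ᵃ[ℝ] ℝ :=
  if hp : p ∈ τ then (hS.cellBasis hτ).coord ⟨p, hp⟩ else 0

theorem cellCoord_apply_of_mem (hS : Standing M c P 𝒟) (hτ : τ ∈ 𝒟) (hq : q ∈ τ) :
    hS.cellCoord hτ p q = if q = p then 1 else 0 := by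
  by_cases hqp : q = p
  · subst hqp
    rw [cellCoord, dif_pos hq, if_pos rfl]
    exact (hS.cellBasis hτ).coord_apply_eq ⟨q, hq⟩
  rw [if_neg hqp, cellCoord]
  split_ifs with hp
  · exact (hS.cellBasis hτ).coord_apply_ne (j := ⟨q, hq⟩) fun h => hqp (congrArg Subtype.val h).symm
  · rfl

theorem cellCoord_nonneg (hS : Standing M c P 𝒟) (hτ : τ ∈ 𝒟)
    (hx : x ∈ convexHull ℝ (τ : Set (EuclideanSpace ℝ (Fin d)))) : 0 ≤ hS.cellCoord hτ p x := by
  unfold cellCoord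
  split_ifs with hp
  · have hrange : range (hS.cellBasis hτ) = τ := Subtype.range_coe_subtype
    rw [← hrange, (hS.cellBasis hτ).convexHull_eq_nonneg_coord] at hx
    exact hx ⟨p, hp⟩
  · rfl

theorem mul_dist_cellCoord_le (hS : Standing M c P 𝒟) (hτ : τ ∈ 𝒟)
    (hD : p ∈ τ → D ≤ vertexFacetDist τ p) (x y : EuclideanSpace ℝ (Fin d)) :
    D * dist (hS.cellCoord hτ p x) (hS.cellCoord hτ p y) ≤ dist x y := by
  unfold cellCoord
  split_ifs with hp
  · have hfacet : (hS.cellBasis hτ) '' {⟨p, hp⟩}ᶜ = ↑(τ.erase p) := by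
      change Subtype.val '' _ = _
      ext; simp [and_comm]
    have := (hS.cellBasis hτ).infDist_mul_abs_coord_sub_le ⟨p, hp⟩ x y
    rw [hfacet] at this
    exact (mul_le_mul_of_nonneg_right (hD hp) (abs_nonneg _)).trans this
  · simp

theorem cellCoord_eqOn (hS : Standing M c P 𝒟) (hτ : τ ∈ 𝒟) (hτ' : τ' ∈ 𝒟) :
    EqOn (hS.cellCoord hτ p) (hS.cellCoord hτ' p)
      (convexHull ℝ (τ : Set (EuclideanSpace ℝ (Fin d))) ∩ convexHull ℝ (τ' : Set _)) := by
  rw [hS.2.2.2.2.2.1 τ hτ τ' hτ']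
  refine (AffineMap.eqOn_affineSpan fun q hq => ?_).mono (convexHull_subset_affineSpan _)
  rw [Finset.coe_inter, mem_inter_iff] at hq
  rw [hS.cellCoord_apply_of_mem hτ hq.1, hS.cellCoord_apply_of_mem hτ' hq.2]

theorem exists_mem_convexHull (hS : Standing M c P 𝒟) (x : EuclideanSpace ℝ (Fin d)) :
    ∃ τ ∈ 𝒟, x ∈ convexHull ℝ (τ : Set (EuclideanSpace ℝ (Fin d))) := by
  simpa only [mem_iUnion₂, exists_prop] using hS.2.2.2.1.symm.subset (mem_univ x)

/-- The barycentric coordinate of `p` read off in an arbitrarily chosen cell containing `x`;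
by `cellCoord_eqOn` the choice does not matter. -/
def baryCoord (hS : Standing M c P 𝒟) (p x : EuclideanSpace ℝ (Fin d)) : ℝ :=
  hS.cellCoord (hS.exists_mem_convexHull x).choose_spec.1 p x

theorem baryCoord_eq (hS : Standing M c P 𝒟) (hτ : τ ∈ 𝒟)
    (hx : x ∈ convexHull ℝ (τ : Set (EuclideanSpace ℝ (Fin d)))) :
    hS.baryCoord p x = hS.cellCoord hτ p x :=
  hS.cellCoord_eqOn _ hτ ⟨(hS.exists_mem_convexHull x).choose_spec.2, hx⟩

theorem mem_Sset_of_baryCoord_pos (hS : Standing M c P 𝒟) (hx : 0 < hS.baryCoord p x) :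
    x ∈ Sset 𝒟 p := by
  obtain ⟨τ, hτ, hxτ⟩ := hS.exists_mem_convexHull x
  rw [hS.baryCoord_eq hτ hxτ, cellCoord] at hx
  split_ifs at hx with hp
  · exact mem_biUnion ⟨hτ, hp⟩ hxτ
  · exact absurd hx (lt_irrefl 0)

theorem one_sub_le_baryCoord_homothety (hS : Standing M c P 𝒟) (hq : q ∈ Sset 𝒟 p) {lam : ℝ}
    (h0 : 0 ≤ lam) (h1 : lam ≤ 1) : 1 - lam ≤ hS.baryCoord p (lam • (q - p) + p) := by
  obtain ⟨τ, ⟨hτ, hp⟩, hqτ⟩ := mem_iUnion₂.1 hq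
  have hline : lam • (q - p) + p = AffineMap.lineMap p q lam := by
    simp [AffineMap.lineMap_apply]
  have hpτ : p ∈ convexHull ℝ (τ : Set (EuclideanSpace ℝ (Fin d))) := subset_convexHull ℝ _ hp
  rw [hline, hS.baryCoord_eq hτ ((convex_convexHull ℝ _).lineMap_mem hpτ hqτ ⟨h0, h1⟩),
    AffineMap.apply_lineMap, hS.cellCoord_apply_of_mem hτ hp, if_pos rfl, AffineMap.lineMap_apply,
    vsub_eq_sub, vadd_eq_add, smul_eq_mul]
  nlinarith [hS.cellCoord_nonneg hτ (p := p) hqτ]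

theorem locallyFinite_convexHull (hS : Standing M c P 𝒟) (hM : 0 < M) :
    LocallyFinite fun τ : 𝒟 => convexHull ℝ (τ : Set (EuclideanSpace ℝ (Fin d))) := by
  obtain ⟨hsep, -, hcells, -, -, -, -, hbdd, -⟩ := hS
  exact locallyFinite_convexHull_of_isSeparatedSet hM hsep (fun τ hτ => (hcells τ hτ).2.1) hbdd

theorem exists_lt_forall_le_vertexFacetDist (hS : Standing M c P 𝒟) (hM : 0 < M)
    (p : EuclideanSpace ℝ (Fin d)) :
    ∃ D, c * M < D ∧ ∀ τ ∈ 𝒟, p ∈ τ → D ≤ vertexFacetDist τ p := by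
  have hfin : {τ ∈ 𝒟 | p ∈ τ}.Finite :=
    (((hS.locallyFinite_convexHull hM).point_finite p).image Subtype.val).subset
      fun τ ⟨hτ, hp⟩ => ⟨⟨τ, hτ⟩, subset_convexHull ℝ _ hp, rfl⟩
  rcases Set.eq_empty_or_nonempty {τ ∈ 𝒟 | p ∈ τ} with h | h
  · exact ⟨c * M + 1, by linarith, fun τ hτ hp => absurd (h.subset ⟨hτ, hp⟩) (notMem_empty τ)⟩
  obtain ⟨τ₀, ⟨hτ₀, hp₀⟩, hmin⟩ := Set.exists_min_image _ (vertexFacetDist · p) hfin h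
  obtain ⟨-, -, -, -, -, -, -, -, hfacet⟩ := hS
  exact ⟨_, hfacet τ₀ hτ₀ p hp₀, fun τ hτ hp => hmin τ ⟨hτ, hp⟩⟩

theorem lipschitzWith_baryCoord (hS : Standing M c P 𝒟) (hM : 0 < M) (hD0 : 0 < D)
    (hD : ∀ τ ∈ 𝒟, p ∈ τ → D ≤ vertexFacetDist τ p) :
    LipschitzWith (Real.toNNReal D⁻¹) (hS.baryCoord p) := by
  refine LipschitzWith.of_eventually_dist_le fun x => ?_
  filter_upwards [(hS.locallyFinite_convexHull hM).eventually_subset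
    (fun τ => τ.1.finite_toSet.isClosed_convexHull (𝕜 := ℝ)) x] with y hy
  obtain ⟨τ, hτ, hyτ⟩ := hS.exists_mem_convexHull y
  have hxτ : x ∈ convexHull ℝ (τ : Set (EuclideanSpace ℝ (Fin d))) := hy (a := ⟨τ, hτ⟩) hyτ
  rw [hS.baryCoord_eq hτ hyτ, hS.baryCoord_eq hτ hxτ, Real.coe_toNNReal _ (by positivity),
    inv_mul_eq_div, le_div_iff₀' hD0]
  exact hS.mul_dist_cellCoord_le hτ (hD τ hτ) y x

theorem ball_homothety_subset_interior_Sset (hS : Standing M c P 𝒟) (hM : 0 < M)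
    (hD0 : 0 < D) (hD : ∀ τ ∈ 𝒟, p ∈ τ → D ≤ vertexFacetDist τ p)
    (hq : q ∈ Sset 𝒟 p) {lam : ℝ} (h0 : 0 ≤ lam) (h1 : lam ≤ 1) :
    ball (lam • (q - p) + p) ((1 - lam) * D) ⊆ interior (Sset 𝒟 p) := by
  refine interior_maximal (fun x hx => hS.mem_Sset_of_baryCoord_pos ?_) isOpen_ball
  have hy := hS.one_sub_le_baryCoord_homothety hq h0 h1
  have hlip := (hS.lipschitzWith_baryCoord hM hD0 hD).dist_le_mul x (lam • (q - p) + p)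
  rw [Real.coe_toNNReal _ (by positivity), Real.dist_eq] at hlip
  have hclose : D⁻¹ * dist x (lam • (q - p) + p) < 1 - lam := by
    rw [inv_mul_lt_iff₀ hD0, mul_comm]
    exact mem_ball.1 hx
  linarith [neg_abs_le (hS.baryCoord p x - hS.baryCoord p (lam • (q - p) + p))]

end Standing

theorem stmt13_general (M c : ℝ) (hM : 0 < M) (hc : 0 < c)
    (P : Set (EuclideanSpace ℝ (Fin d))) (𝒟 : Set (Finset (EuclideanSpace ℝ (Fin d))))
    (hS : Standing M c P 𝒟) (p : EuclideanSpace ℝ (Fin d))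
    (lam : ℝ) (h0 : 0 < lam) (h1 : lam < 1) :
    ∀ y ∈ (fun q => lam • (q - p) + p) '' Sset 𝒟 p,
      ∀ z ∈ frontier (Sset 𝒟 p), (1 - lam) * c * M < dist y z := by
  rintro _ ⟨q, hq, rfl⟩ z hz
  obtain ⟨D, hcD, hD⟩ := hS.exists_lt_forall_le_vertexFacetDist hM p
  have hD0 : 0 < D := (mul_pos hc hM).trans hcD
  have hzy : (1 - lam) * D ≤ dist (lam • (q - p) + p) z := not_lt.1 fun h =>
    hz.2 (hS.ball_homothety_subset_interior_Sset hM hD0 hD hq h0.le h1.le (mem_ball'.2 h))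
  calc (1 - lam) * c * M = (1 - lam) * (c * M) := mul_assoc ..
    _ < (1 - lam) * D := mul_lt_mul_of_pos_left hcD (sub_pos.2 h1)
    _ ≤ _ := hzy

/-- Under the standing assumptions, for every `p ∈ P` and `0 < λ < 1`, each point of
`λ(S(p) − p) + p` is at distance greater than `(1−λ)·c·M` from every point of the
boundary of `S(p)`. -/
theorem stmt13 (hd : 1 ≤ d) (M c : ℝ) (hM : 0 < M) (hc : 0 < c)
    (P : Set (EuclideanSpace ℝ (Fin d))) (𝒟 : Set (Finset (EuclideanSpace ℝ (Fin d))))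
    (hS : Standing M c P 𝒟) (p : EuclideanSpace ℝ (Fin d)) (hp : p ∈ P)
    (lam : ℝ) (h0 : 0 < lam) (h1 : lam < 1) :
    ∀ y ∈ (fun q => lam • (q - p) + p) '' Sset 𝒟 p,
      ∀ z ∈ frontier (Sset 𝒟 p), (1 - lam) * c * M < dist y z :=
  stmt13_general M c hM hc P 𝒟 hS p lam h0 h1
end
end
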